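/- arXiv:2011.05906 — 7 statements merged into one kernel-verified Lean document; each statement's English description precedes it below -/
import Mathlib

section
/- Let n = 2, ℓ > 0, p > 1, and let q satisfy 1 < q < 2(ℓ+1)/(2ℓ+1). Let u0, u1 : ℝ² → ℝ be continuous, nonnegative, with supports contained in the ball {|x| ≤ R} for some R > 0, and assume ∫_{ℝ²} u1(x) dx > 0. Then there exist constants ε0 > 0 and C > 0, independent of ε, such that for every ε ∈ (0, ε0] and every T > 0 for which a classical solution u on [0,T) of ∂_t² u − t^{2ℓ} Δu = |∂_t u|^p + |u|^q with data (ε u0, ε u1) exists, one has T ≤ C ε^{−((q+1)/(q−1) − 2(ℓ+1))^{−1}}. -/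
open Set MeasureTheory

/-- `φ_ℓ(t) = t^{ℓ+1}/(ℓ+1)`. -/
noncomputable def phi (l t : ℝ) : ℝ := t ^ (l + 1) / (l + 1)

/-- The Laplacian of `f : ℝⁿ → ℝ`, as the sum of the second partial derivatives. -/
noncomputable def lap {n : ℕ} (f : EuclideanSpace ℝ (Fin n) → ℝ)
    (x : EuclideanSpace ℝ (Fin n)) : ℝ :=
  ∑ i : Fin n, fderiv ℝ (fun y => fderiv ℝ f y (EuclideanSpace.single i 1)) x
      (EuclideanSpace.single i 1)

/-- A classical solution on `[0,T)` of `∂_t² u − t^{2ℓ} Δu = |∂_t u|^p + |u|^q`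
with data `(ε u0, ε u1)`, whose support at each time `t` is contained in the
ball of radius `R + φ_ℓ(t)`. -/
def IsClassicalSolution (n : ℕ) (l R ε p q T : ℝ)
    (u0 u1 : EuclideanSpace ℝ (Fin n) → ℝ)
    (u : ℝ → EuclideanSpace ℝ (Fin n) → ℝ) : Prop :=
  ContDiffOn ℝ 2 (fun z : ℝ × EuclideanSpace ℝ (Fin n) => u z.1 z.2)
      (Ico (0:ℝ) T ×ˢ (univ : Set (EuclideanSpace ℝ (Fin n)))) ∧
  (∀ t ∈ Ioo (0:ℝ) T, ∀ x, deriv (fun s => deriv (fun r => u r x) s) t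
      - t ^ (2 * l) * lap (u t) x
      = |deriv (fun s => u s x) t| ^ p + |u t x| ^ q) ∧
  (∀ x, u 0 x = ε * u0 x) ∧
  (∀ x, derivWithin (fun s => u s x) (Ici (0:ℝ)) 0 = ε * u1 x) ∧
  (∀ t ∈ Ico (0:ℝ) T, Function.support (u t) ⊆ Metric.closedBall 0 (R + phi l t))

/-! ### Auxiliary lemmas -/
set_option maxHeartbeats 1000000

local notation "E2" => EuclideanSpace ℝ (Fin 2)

section Aux

lemma mono_of_hasDerivAt_nonneg {a b : ℝ} {W W' : ℝ → ℝ} (hab : a ≤ b)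
    (hd : ∀ r ∈ Icc a b, HasDerivAt W (W' r) r) (hpos : ∀ r ∈ Icc a b, 0 ≤ W' r) :
    W a ≤ W b := by
  have hmono : MonotoneOn W (Icc a b) := by
    apply monotoneOn_of_deriv_nonneg (convex_Icc a b)
    · exact fun r hr => (hd r hr).continuousAt.continuousWithinAt
    · intro r hr
      rw [interior_Icc] at hr
      exact (hd r (Ioo_subset_Icc_self hr)).differentiableAt.differentiableWithinAt
    · intro r hr
      rw [interior_Icc] at hr
      rw [(hd r (Ioo_subset_Icc_self hr)).deriv]
      exact hpos r (Ioo_subset_Icc_self hr)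
  exact hmono (left_mem_Icc.2 hab) (right_mem_Icc.2 hab) hab

lemma real_add_rpow_le {x y p : ℝ} (hx : 0 ≤ x) (hy : 0 ≤ y) (hp : 1 ≤ p) :
    x ^ p + y ^ p ≤ (x + y) ^ p := by
  set a : NNReal := ⟨x, hx⟩
  set b : NNReal := ⟨y, hy⟩
  have h2 := NNReal.add_rpow_le_rpow_add a b hp
  have h3 : ((a ^ p + b ^ p : NNReal) : ℝ) ≤ (((a + b) ^ p : NNReal) : ℝ) := by exact_mod_cast h2
  rw [NNReal.coe_add, NNReal.coe_rpow, NNReal.coe_rpow, NNReal.coe_rpow, NNReal.coe_add] at h3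
  exact h3

lemma ode_est {T q a A K T₀ : ℝ} (hq : 1 < q) (ha : 0 ≤ a) (hA : 0 < A) (hK : 0 < K)
    (hT₀ : 1 ≤ T₀)
    {f f' f'' : ℝ → ℝ}
    (h1 : ∀ t ∈ Ioo (0:ℝ) T, HasDerivAt f (f' t) t)
    (h2 : ∀ t ∈ Ioo (0:ℝ) T, HasDerivAt f' (f'' t) t)
    (h3 : ∀ t ∈ Ioo (0:ℝ) T, K ≤ f' t)
    (h4 : ∀ t ∈ Ioo (0:ℝ) T, K * t ≤ f t)
    (h5 : ∀ t ∈ Ioo (0:ℝ) T, T₀ ≤ t → A * t ^ (-a) * f t ^ q ≤ f'' t)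
    {t : ℝ} (ht : t ∈ Ioo (0:ℝ) T) (ht4 : 4 * T₀ ≤ t) :
    Real.sqrt (2*A/(q+1)) * t ^ (-(a/2)) * (t/2)
      ≤ (2/(q-1)) * (K*t/4) ^ (-((q-1)/2)) := by
  obtain ⟨ht0, htT⟩ := ht
  set c : ℝ := 2*A/(q+1) with hc_def
  have hq1 : (0:ℝ) < q - 1 := by linarith
  have hqp1 : (0:ℝ) < q + 1 := by linarith
  have hc : 0 < c := by positivity
  have hcq : c * (q+1) = 2*A := by rw [hc_def]; field_simp
  set sc : ℝ := Real.sqrt c with hsc_def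
  have hsc : 0 < sc := Real.sqrt_pos.2 hc
  have hscsq : sc * sc = c := Real.mul_self_sqrt hc.le
  have hτ0 : 0 < t/4 := by linarith
  have hτT : t/4 < T := by linarith
  have hτmem : t/4 ∈ Ioo (0:ℝ) T := ⟨hτ0, hτT⟩
  have hT₀τ : T₀ ≤ t/4 := by linarith
  have hIcc_sub : ∀ {s : ℝ}, s ∈ Icc (t/4) t → s ∈ Ioo (0:ℝ) T := by
    rintro s ⟨hs1, hs2⟩; exact ⟨lt_of_lt_of_le hτ0 hs1, lt_of_le_of_lt hs2 htT⟩
  have hIcc2_sub : ∀ {s : ℝ}, s ∈ Icc (t/2) t → s ∈ Icc (t/4) t := by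
    rintro s ⟨hs1, hs2⟩; exact ⟨by linarith, hs2⟩
  have hfτnn : 0 ≤ f (t/4) := le_trans (by positivity) (h4 _ hτmem)
  -- Step A
  have stepA : ∀ s ∈ Icc (t/2) t,
      c * s ^ (-a) * (f s ^ (q+1) - f (t/4) ^ (q+1)) ≤ f' s * f' s := by
    intro s hs
    have hs' := hIcc2_sub hs
    have hsmem := hIcc_sub hs'
    have hs0 : 0 < s := hsmem.1
    have hsa : (0:ℝ) ≤ c * s ^ (-a) := by positivity
    have hmono : f' (t/4) * f' (t/4) - (c * s ^ (-a)) * f (t/4) ^ (q+1)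
        ≤ f' s * f' s - (c * s ^ (-a)) * f s ^ (q+1) := by
      apply mono_of_hasDerivAt_nonneg (W := fun r => f' r * f' r - (c * s ^ (-a)) * f r ^ (q+1))
        (W' := fun r => (f'' r * f' r + f' r * f'' r)
          - (c * s ^ (-a)) * (f' r * (q+1) * f r ^ (q+1-1))) hs'.1
      · intro r hr
        have hrmem : r ∈ Ioo (0:ℝ) T := hIcc_sub ⟨hr.1, le_trans hr.2 hs'.2⟩
        exact ((h2 r hrmem).mul (h2 r hrmem)).sub
          (((h1 r hrmem).rpow_const (Or.inr (by linarith))).const_mul (c * s ^ (-a)))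
      · intro r hr
        have hrmem : r ∈ Ioo (0:ℝ) T := hIcc_sub ⟨hr.1, le_trans hr.2 hs'.2⟩
        have hr0 : 0 < r := hrmem.1
        have hfr : 0 ≤ f r := le_trans (by positivity) (h4 r hrmem)
        have hfrq : 0 ≤ f r ^ q := Real.rpow_nonneg hfr q
        have hfr' : K ≤ f' r := h3 r hrmem
        have hra : s ^ (-a) ≤ r ^ (-a) :=
          Real.rpow_le_rpow_of_nonpos hr0 hr.2 (neg_nonpos.2 ha)
        have hkey : A * s ^ (-a) * f r ^ q ≤ f'' r := by
          refine le_trans ?_ (h5 r hrmem (le_trans hT₀τ hr.1))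
          have := mul_le_mul_of_nonneg_left hra (le_of_lt hA)
          exact mul_le_mul_of_nonneg_right this hfrq
        have hexp : q + 1 - 1 = q := by ring
        rw [hexp]
        have hid : f'' r * f' r + f' r * f'' r - (c * s ^ (-a)) * (f' r * (q+1) * f r ^ q)
            = 2 * f' r * (f'' r - A * s ^ (-a) * f r ^ q)
              + (f' r * (s ^ (-a) * f r ^ q)) * (2*A - c*(q+1)) := by ring
        rw [hid]
        have hz : 2*A - c*(q+1) = 0 := by rw [hcq]; ring
        rw [hz, mul_zero, add_zero]
        exact mul_nonneg (by linarith) (by linarith)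
    have hsplit : (c * s ^ (-a)) * (f s ^ (q+1) - f (t/4) ^ (q+1))
        = (c * s ^ (-a)) * f s ^ (q+1) - (c * s ^ (-a)) * f (t/4) ^ (q+1) := by ring
    have hfτsq : 0 ≤ f' (t/4) * f' (t/4) := mul_self_nonneg _
    linarith [hmono, hsplit, hfτsq]
  -- Step B
  have stepB : ∀ s ∈ Icc (t/4) t, K * (s - t/4) ≤ f s - f (t/4) := by
    intro s hs
    have hmono : f (t/4) - K * (t/4) ≤ f s - K * s := by
      apply mono_of_hasDerivAt_nonneg (W := fun r => f r - K * r)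
        (W' := fun r => f' r - K) hs.1
      · intro r hr
        have hrmem : r ∈ Ioo (0:ℝ) T := hIcc_sub ⟨hr.1, le_trans hr.2 hs.2⟩
        exact (h1 r hrmem).sub (by simpa using (hasDerivAt_id r).const_mul K)
      · intro r hr
        have hrmem : r ∈ Ioo (0:ℝ) T := hIcc_sub ⟨hr.1, le_trans hr.2 hs.2⟩
        linarith [h3 r hrmem]
    linarith
  have hGt2 : ∀ s ∈ Icc (t/2) t, 0 < f s - f (t/4) := by
    intro s hs
    have h1' : (0:ℝ) < K * (s - t/4) := mul_pos hK (by linarith [hs.1])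
    linarith [stepB s (hIcc2_sub hs)]
  -- Step D
  have stepD : ∀ s ∈ Icc (t/2) t,
      sc * s ^ (-(a/2)) * (f s - f (t/4)) ^ ((q+1)/2) ≤ f' s := by
    intro s hs
    have hs' := hIcc2_sub hs
    have hsmem := hIcc_sub hs'
    have hs0 : 0 < s := hsmem.1
    have hGpos : 0 < f s - f (t/4) := hGt2 s hs
    have hsuper : f (t/4) ^ (q+1) + (f s - f (t/4)) ^ (q+1) ≤ f s ^ (q+1) := by
      have h := real_add_rpow_le hfτnn hGpos.le (by linarith : (1:ℝ) ≤ q+1)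
      have hfs : f (t/4) + (f s - f (t/4)) = f s := by ring
      rwa [hfs] at h
    have e1 : s ^ (-(a/2)) * s ^ (-(a/2)) = s ^ (-a) := by
      rw [← Real.rpow_add hs0]; congr 1; ring
    have e2 : (f s - f (t/4)) ^ ((q+1)/2) * (f s - f (t/4)) ^ ((q+1)/2)
        = (f s - f (t/4)) ^ (q+1) := by
      rw [← Real.rpow_add hGpos]; congr 1; ring
    have hXX : (sc * s ^ (-(a/2)) * (f s - f (t/4)) ^ ((q+1)/2))
          * (sc * s ^ (-(a/2)) * (f s - f (t/4)) ^ ((q+1)/2))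
        = c * s ^ (-a) * (f s - f (t/4)) ^ (q+1) := by
      calc (sc * s ^ (-(a/2)) * (f s - f (t/4)) ^ ((q+1)/2))
            * (sc * s ^ (-(a/2)) * (f s - f (t/4)) ^ ((q+1)/2))
          = (sc*sc) * (s ^ (-(a/2)) * s ^ (-(a/2)))
            * ((f s - f (t/4)) ^ ((q+1)/2) * (f s - f (t/4)) ^ ((q+1)/2)) := by ring
        _ = c * s ^ (-a) * (f s - f (t/4)) ^ (q+1) := by rw [hscsq, e1, e2]
    have hXnn : 0 ≤ sc * s ^ (-(a/2)) * (f s - f (t/4)) ^ ((q+1)/2) := by positivity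
    have hf's : 0 < f' s := lt_of_lt_of_le hK (h3 s hsmem)
    have hsa : (0:ℝ) ≤ c * s ^ (-a) := by positivity
    have hsq : (sc * s ^ (-(a/2)) * (f s - f (t/4)) ^ ((q+1)/2))
          * (sc * s ^ (-(a/2)) * (f s - f (t/4)) ^ ((q+1)/2)) ≤ f' s * f' s := by
      rw [hXX]
      refine le_trans ?_ (stepA s hs)
      have hle : (f s - f (t/4)) ^ (q+1) ≤ f s ^ (q+1) - f (t/4) ^ (q+1) := by linarith
      exact mul_le_mul_of_nonneg_left hle hsa
    nlinarith [hsq, hXnn, hf's]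
  -- Step E
  have stepE : (-(2/(q-1))) * (f (t/2) - f (t/4)) ^ (-((q-1)/2)) - sc * t ^ (-(a/2)) * (t/2)
      ≤ (-(2/(q-1))) * (f t - f (t/4)) ^ (-((q-1)/2)) - sc * t ^ (-(a/2)) * t := by
    apply mono_of_hasDerivAt_nonneg
      (W := fun s => (-(2/(q-1))) * (f s - f (t/4)) ^ (-((q-1)/2)) - sc * t ^ (-(a/2)) * s)
      (W' := fun s => (-(2/(q-1))) * (f' s * (-((q-1)/2)) * (f s - f (t/4)) ^ (-((q-1)/2) - 1))
        - sc * t ^ (-(a/2))) (by linarith)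
    · intro r hr
      have hrmem : r ∈ Ioo (0:ℝ) T := hIcc_sub (hIcc2_sub hr)
      have hGr := hGt2 r hr
      have hd1 : HasDerivAt (fun s => (f s - f (t/4)) ^ (-((q-1)/2)))
          (f' r * (-((q-1)/2)) * (f r - f (t/4)) ^ (-((q-1)/2) - 1)) r :=
        ((h1 r hrmem).sub_const (f (t/4))).rpow_const (Or.inl (ne_of_gt hGr))
      have hd2 : HasDerivAt (fun s => sc * t ^ (-(a/2)) * s) (sc * t ^ (-(a/2))) r := by
        simpa using (hasDerivAt_id r).const_mul (sc * t ^ (-(a/2)))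
      exact (hd1.const_mul _).sub hd2
    · intro r hr
      have hrmem : r ∈ Ioo (0:ℝ) T := hIcc_sub (hIcc2_sub hr)
      have hr0 : 0 < r := hrmem.1
      have hGr := hGt2 r hr
      have hstep := stepD r hr
      have hGpow : (0:ℝ) < (f r - f (t/4)) ^ (-((q-1)/2) - 1) := Real.rpow_pos_of_pos hGr _
      have hmul := mul_le_mul_of_nonneg_right hstep hGpow.le
      have hcollapse : sc * r ^ (-(a/2)) * (f r - f (t/4)) ^ ((q+1)/2)
            * (f r - f (t/4)) ^ (-((q-1)/2) - 1)
          = sc * r ^ (-(a/2)) := by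
        rw [mul_assoc, ← Real.rpow_add hGr]
        have hz : (q+1)/2 + (-((q-1)/2) - 1) = 0 := by ring
        rw [hz, Real.rpow_zero, mul_one]
      rw [hcollapse] at hmul
      have hta : t ^ (-(a/2)) ≤ r ^ (-(a/2)) :=
        Real.rpow_le_rpow_of_nonpos hr0 hr.2 (by linarith : -(a/2) ≤ 0)
      have h6 : sc * t ^ (-(a/2)) ≤ f' r * (f r - f (t/4)) ^ (-((q-1)/2) - 1) := by
        refine le_trans ?_ hmul
        exact mul_le_mul_of_nonneg_left hta hsc.le
      have hfinal : (-(2/(q-1))) * (f' r * (-((q-1)/2)) * (f r - f (t/4)) ^ (-((q-1)/2) - 1))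
          = f' r * (f r - f (t/4)) ^ (-((q-1)/2) - 1) := by
        field_simp
      rw [hfinal]
      linarith
  -- extract conclusion
  have hGt4 : K * (t/4) ≤ f (t/2) - f (t/4) := by
    have h := stepB (t/2) ⟨by linarith, by linarith⟩
    linarith
  have hKt4 : (0:ℝ) < K * t / 4 := by positivity
  have hrpow_mono : (f (t/2) - f (t/4)) ^ (-((q-1)/2)) ≤ (K*t/4) ^ (-((q-1)/2)) :=
    Real.rpow_le_rpow_of_nonpos hKt4 (by linarith) (by linarith : -((q-1)/2) ≤ 0)
  have hGtpos : (0:ℝ) < (f t - f (t/4)) ^ (-((q-1)/2)) :=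
    Real.rpow_pos_of_pos (hGt2 t ⟨by linarith, le_refl t⟩) _
  have h2q : (0:ℝ) < 2/(q-1) := by positivity
  have hPt : sc * t ^ (-(a/2)) * t - sc * t ^ (-(a/2)) * (t/2) = sc * t ^ (-(a/2)) * (t/2) := by
    ring
  have hb1 : (2/(q-1)) * (f (t/2) - f (t/4)) ^ (-((q-1)/2))
      ≤ (2/(q-1)) * (K*t/4) ^ (-((q-1)/2)) := mul_le_mul_of_nonneg_left hrpow_mono h2q.le
  have hb2 : (0:ℝ) ≤ (2/(q-1)) * (f t - f (t/4)) ^ (-((q-1)/2)) :=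
    mul_nonneg h2q.le hGtpos.le
  linarith

noncomputable def odeD (q a A : ℝ) : ℝ :=
  ((2/Real.sqrt (2*A/(q+1))) * (2/(q-1))) ^ ((q+1-a)/2)⁻¹ * 4 ^ ((q-1)/(q+1-a))

lemma odeD_pos {q a A : ℝ} (hq : 1 < q) (hA : 0 < A) : 0 < odeD q a A := by
  have hsc : 0 < Real.sqrt (2*A/(q+1)) := Real.sqrt_pos.2 (by positivity)
  have hq1 : (0:ℝ) < q - 1 := by linarith
  have h1 : 0 < (2/Real.sqrt (2*A/(q+1))) * (2/(q-1)) :=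
    mul_pos (div_pos two_pos hsc) (div_pos two_pos hq1)
  unfold odeD
  exact mul_pos (Real.rpow_pos_of_pos h1 _) (Real.rpow_pos_of_pos (by norm_num) _)

lemma ode_blowup {T q a A K T₀ : ℝ} (hq : 1 < q) (ha : 0 ≤ a) (hA : 0 < A) (hK : 0 < K)
    (hT₀ : 1 ≤ T₀) (he : 0 < q + 1 - a)
    {f f' f'' : ℝ → ℝ}
    (h1 : ∀ t ∈ Ioo (0:ℝ) T, HasDerivAt f (f' t) t)
    (h2 : ∀ t ∈ Ioo (0:ℝ) T, HasDerivAt f' (f'' t) t)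
    (h3 : ∀ t ∈ Ioo (0:ℝ) T, K ≤ f' t)
    (h4 : ∀ t ∈ Ioo (0:ℝ) T, K * t ≤ f t)
    (h5 : ∀ t ∈ Ioo (0:ℝ) T, T₀ ≤ t → A * t ^ (-a) * f t ^ q ≤ f'' t) :
    T ≤ max (4*T₀) (odeD q a A * K ^ (-((q-1)/(q+1-a)))) := by
  set β : ℝ := (q-1)/(q+1-a) with hβ_def
  have hq1 : (0:ℝ) < q - 1 := by linarith
  have key : ∀ t ∈ Ioo (0:ℝ) T, 4 * T₀ ≤ t → t ≤ odeD q a A * K ^ (-β) := by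
    intro t ht ht4
    have ht0 : 0 < t := ht.1
    have hest := ode_est hq ha hA hK hT₀ h1 h2 h3 h4 h5 ht ht4
    set c : ℝ := 2*A/(q+1) with hc_def
    have hc : 0 < c := by positivity
    set sc : ℝ := Real.sqrt c with hsc_def
    have hsc : 0 < sc := Real.sqrt_pos.2 hc
    set e : ℝ := (q+1-a)/2 with he_def
    have he2 : 0 < e := by rw [he_def]; linarith
    set r₀ : ℝ := -((q-1)/2) with hr₀_def
    have lhs_eq : sc * t ^ (-(a/2)) * (t/2) = (sc/2) * (t ^ e * t ^ r₀) := by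
      rw [← Real.rpow_add ht0 e r₀]
      have hex : e + r₀ = -(a/2) + 1 := by rw [he_def, hr₀_def]; ring
      rw [hex, Real.rpow_add ht0, Real.rpow_one]; ring
    have rhs_eq : (2/(q-1)) * (K*t/4) ^ r₀ = (2/(q-1)) * (K/4) ^ r₀ * t ^ r₀ := by
      rw [show K*t/4 = (K/4)*t by ring, Real.mul_rpow (by positivity) ht0.le]; ring
    rw [lhs_eq, rhs_eq] at hest
    have htr : 0 < t ^ r₀ := Real.rpow_pos_of_pos ht0 _
    have hest2 : (sc/2) * t ^ e ≤ (2/(q-1)) * (K/4) ^ r₀ := by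
      have := le_of_mul_le_mul_right (by linarith [hest] :
        ((sc/2) * t ^ e) * t ^ r₀ ≤ ((2/(q-1)) * (K/4) ^ r₀) * t ^ r₀) htr
      exact this
    have hZ : t ^ e ≤ (2/sc) * (2/(q-1)) * (K/4) ^ r₀ := by
      have h2sc : 0 < 2/sc := by positivity
      calc t ^ e = (2/sc) * ((sc/2) * t ^ e) := by field_simp
        _ ≤ (2/sc) * ((2/(q-1)) * (K/4) ^ r₀) := by
            exact mul_le_mul_of_nonneg_left hest2 h2sc.le
        _ = (2/sc) * (2/(q-1)) * (K/4) ^ r₀ := by ring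
    have hfin : t ≤ ((2/sc) * (2/(q-1)) * (K/4) ^ r₀) ^ e⁻¹ := by
      have h1' : t = (t ^ e) ^ e⁻¹ := by
        rw [← Real.rpow_mul ht0.le, mul_inv_cancel₀ he2.ne', Real.rpow_one]
      rw [h1']
      exact Real.rpow_le_rpow (Real.rpow_nonneg ht0.le e) hZ (inv_nonneg.2 he2.le)
    have hsplit : ((2/sc) * (2/(q-1)) * (K/4) ^ r₀) ^ e⁻¹
        = ((2/sc) * (2/(q-1))) ^ e⁻¹ * ((K/4) ^ r₀) ^ e⁻¹ := by
      apply Real.mul_rpow (by positivity) (Real.rpow_nonneg (by positivity) _)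
    have hKpart : ((K/4) ^ r₀) ^ e⁻¹ = K ^ (-β) * 4 ^ β := by
      rw [← Real.rpow_mul (by positivity : (0:ℝ) ≤ K/4)]
      have hre : r₀ * e⁻¹ = -β := by
        rw [hr₀_def, he_def, hβ_def]; field_simp
      rw [hre, Real.div_rpow hK.le (by norm_num : (0:ℝ) ≤ 4),
        Real.rpow_neg (by norm_num : (0:ℝ) ≤ 4)]
      field_simp
    calc t ≤ ((2/sc) * (2/(q-1)) * (K/4) ^ r₀) ^ e⁻¹ := hfin
      _ = ((2/sc) * (2/(q-1))) ^ e⁻¹ * (K ^ (-β) * 4 ^ β) := by rw [hsplit, hKpart]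
      _ = odeD q a A * K ^ (-β) := by rw [odeD]; ring
  by_contra hcon
  push_neg at hcon
  set M := max (4*T₀) (odeD q a A * K ^ (-β)) with hM_def
  have hM4 : 4*T₀ ≤ M := le_max_left _ _
  have hM0 : 0 < M := lt_of_lt_of_le (by linarith) hM4
  have htmem : (M+T)/2 ∈ Ioo (0:ℝ) T := ⟨by linarith, by linarith⟩
  have hkey := key ((M+T)/2) htmem (by linarith)
  have hle : (M+T)/2 ≤ M := le_trans hkey (le_max_right _ _)
  linarith

lemma fderiv_apply_zero_of_not_mem_tsupport {g : E2 → ℝ} {x : E2}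
    (hx : x ∉ tsupport g) (v : E2) : fderiv ℝ g x v = 0 := by
  rw [fderiv_of_notMem_tsupport _ hx]; rfl

lemma integral_fderiv_apply_eq_zero {g : E2 → ℝ} (hg : ContDiff ℝ 1 g)
    (hcs : HasCompactSupport g) (v : E2) :
    ∫ x, fderiv ℝ g x v = 0 := by
  obtain ⟨M, hM0, hMsub⟩ : ∃ M, 0 < M ∧ tsupport g ⊆ Metric.closedBall 0 M := by
    rcases hcs.isBounded.subset_closedBall 0 with ⟨M, hM⟩
    exact ⟨max M 1, by positivity,
      hM.trans (Metric.closedBall_subset_closedBall (le_max_left _ _))⟩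
  set χb : ContDiffBump (0 : E2) := ⟨M+1, M+2, by linarith, by linarith⟩ with hχ_def
  set χ : E2 → ℝ := fun x => χb x with hχfun
  have hχsmooth : ContDiff ℝ 1 χ := χb.contDiff
  have hχcs : HasCompactSupport χ := χb.hasCompactSupport
  have hgcont : Continuous g := hg.continuous
  have hg'cont : Continuous (fun x => fderiv ℝ g x v) :=
    (hg.continuous_fderiv one_ne_zero).clm_apply continuous_const
  have hχcont : Continuous χ := hχsmooth.continuous
  have hχ'zero : ∀ x ∈ Metric.ball (0:E2) (M+1), fderiv ℝ χ x = 0 := by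
    intro x hx
    have hev : χ =ᶠ[nhds x] (fun _ => 1) := by
      filter_upwards [Metric.isOpen_ball.mem_nhds hx] with y hy
      exact χb.one_of_mem_closedBall (Metric.ball_subset_closedBall hy)
    rw [hev.fderiv_eq, fderiv_const_apply]
  have hzero1 : ∀ x, fderiv ℝ χ x v * g x = 0 := by
    intro x
    by_cases hx : x ∈ tsupport g
    · have hxm := hMsub hx
      rw [Metric.mem_closedBall] at hxm
      have : x ∈ Metric.ball (0:E2) (M+1) := Metric.mem_ball.mpr (by linarith)
      rw [hχ'zero x this]; simp
    · rw [image_eq_zero_of_notMem_tsupport hx, mul_zero]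
  have hf'g : Integrable (fun x => fderiv ℝ χ x v * g x) := by
    have : (fun x => fderiv ℝ χ x v * g x) = fun _ => 0 := funext hzero1
    rw [this]; exact integrable_zero _ _ _
  have hfg' : Integrable (fun x => χ x * fderiv ℝ g x v) :=
    (hχcont.mul hg'cont).integrable_of_hasCompactSupport hχcs.mul_right
  have hfg : Integrable (fun x => χ x * g x) :=
    (hχcont.mul hgcont).integrable_of_hasCompactSupport hχcs.mul_right
  have key := integral_mul_fderiv_eq_neg_fderiv_mul_of_integrable hf'g hfg' hfg
    (fun x _ => hχsmooth.differentiable one_ne_zero x) (fun x _ => hg.differentiable one_ne_zero x)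
  have hrhs : ∫ x, fderiv ℝ χ x v * g x = 0 := by
    have : (fun x => fderiv ℝ χ x v * g x) = fun _ => 0 := funext hzero1
    rw [this, integral_zero]
  rw [hrhs, neg_zero] at key
  have hlhs : ∀ x, χ x * fderiv ℝ g x v = fderiv ℝ g x v := by
    intro x
    by_cases hx : x ∈ tsupport g
    · have hmem : x ∈ Metric.closedBall (0:E2) (M+1) :=
        Metric.closedBall_subset_closedBall (by linarith) (hMsub hx)
      have h1 : χ x = 1 := χb.one_of_mem_closedBall hmem
      rw [h1, one_mul]
    · rw [fderiv_apply_zero_of_not_mem_tsupport hx, mul_zero]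
  calc ∫ x, fderiv ℝ g x v = ∫ x, χ x * fderiv ℝ g x v := by
        congr 1; exact (funext hlhs).symm
    _ = 0 := key

lemma integral_lap_eq_zero {f : E2 → ℝ} (hf : ContDiff ℝ 2 f) (hcs : HasCompactSupport f) :
    ∫ x, lap f x = 0 := by
  have hg : ∀ i : Fin 2, ContDiff ℝ 1 (fun y => fderiv ℝ f y (EuclideanSpace.single i 1)) := by
    intro i
    exact (hf.fderiv_right (m := 1) (by norm_num)).clm_apply contDiff_const
  have hgcs : ∀ i : Fin 2,
      HasCompactSupport (fun y => fderiv ℝ f y (EuclideanSpace.single i 1)) := fun i =>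
    hcs.fderiv_apply ℝ (EuclideanSpace.single i 1)
  have hint : ∀ i : Fin 2, Integrable
      (fun x => fderiv ℝ (fun y => fderiv ℝ f y (EuclideanSpace.single i 1)) x
        (EuclideanSpace.single i 1)) := by
    intro i
    exact (((hg i).continuous_fderiv one_ne_zero).clm_apply continuous_const
      ).integrable_of_hasCompactSupport ((hgcs i).fderiv_apply ℝ _)
  have hsum : ∫ x, lap f x = ∑ i : Fin 2, ∫ x,
      fderiv ℝ (fun y => fderiv ℝ f y (EuclideanSpace.single i 1)) x
        (EuclideanSpace.single i 1) := by
    rw [← integral_finset_sum]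
    · rfl
    · exact fun i _ => hint i
  rw [hsum]
  refine Finset.sum_eq_zero fun i _ => ?_
  exact integral_fderiv_apply_eq_zero (hg i) (hgcs i) _

lemma hcs_of_support_subset {f : E2 → ℝ} {ρ : ℝ}
    (hsupp : Function.support f ⊆ Metric.closedBall 0 ρ) : HasCompactSupport f :=
  HasCompactSupport.of_support_subset_isCompact (isCompact_closedBall (0:E2) ρ) hsupp

lemma vol_ball_toReal {ρ : ℝ} (hρ : 0 ≤ ρ) :
    (volume (Metric.closedBall (0:E2) ρ)).toReal
      = ρ^2 * (volume (Metric.closedBall (0:E2) 1)).toReal := by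
  rw [Measure.addHaar_closedBall' volume (0:E2) hρ, ENNReal.toReal_mul,
    ENNReal.toReal_ofReal (by positivity)]
  congr 2
  rw [finrank_euclideanSpace_fin]

lemma vol_ball_pos : 0 < (volume (Metric.closedBall (0:E2) 1)).toReal := by
  refine ENNReal.toReal_pos (ne_of_gt (Metric.measure_closedBall_pos volume (0:E2) one_pos)) ?_
  exact (measure_closedBall_lt_top).ne

lemma holder_bound {f : E2 → ℝ} (hf : Continuous f) {ρ q : ℝ} (hρ : 0 < ρ) (hq : 1 < q)
    (hsupp : Function.support f ⊆ Metric.closedBall 0 ρ) (hnn : 0 ≤ ∫ x, f x) :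
    (∫ x, f x) ^ q
      ≤ (∫ x, |f x| ^ q) * ((volume (Metric.closedBall (0:E2) ρ)).toReal) ^ (q - 1) := by
  have hcs : HasCompactSupport f := hcs_of_support_subset hsupp
  have hq0 : (0:ℝ) < q := by linarith
  set q' : ℝ := q/(q-1) with hq'_def
  have hq'0 : 0 < q' := by apply div_pos <;> linarith
  have hpq : q.HolderConjugate q' := Real.HolderConjugate.conjExponent hq
  set s : Set E2 := Metric.closedBall 0 ρ with hs_def
  have hsm : MeasurableSet s := measurableSet_closedBall
  have hsfin : volume s ≠ ⊤ := measure_closedBall_lt_top.ne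
  set g : E2 → ℝ := s.indicator (fun _ => (1:ℝ)) with hg_def
  have hgnn : ∀ x, 0 ≤ g x := fun x => Set.indicator_nonneg (fun _ _ => zero_le_one) x
  have hmemf : MemLp (fun x => |f x|) (ENNReal.ofReal q) volume :=
    (hf.abs).memLp_of_hasCompactSupport (hcs.comp_left (g := abs) abs_zero)
  have hmemg : MemLp g (ENNReal.ofReal q') volume :=
    memLp_indicator_const _ hsm 1 (Or.inr hsfin)
  have happ := integral_mul_le_Lp_mul_Lq_of_nonneg hpq
    (Filter.Eventually.of_forall (fun x => abs_nonneg (f x)))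
    (Filter.Eventually.of_forall hgnn) hmemf hmemg
  have hfg : ∀ x, |f x| * g x = |f x| := by
    intro x
    by_cases hx : x ∈ s
    · rw [hg_def, Set.indicator_of_mem hx, mul_one]
    · have : f x = 0 := by
        by_contra hne
        exact hx (hsupp hne)
      rw [this, abs_zero, zero_mul]
  have hgq : ∀ x, g x ^ q' = g x := by
    intro x
    by_cases hx : x ∈ s
    · rw [hg_def, Set.indicator_of_mem hx, Real.one_rpow]
    · rw [hg_def, Set.indicator_of_notMem hx, Real.zero_rpow hq'0.ne']
  have hintg : ∫ x, g x ^ q' = (volume s).toReal := by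
    rw [funext hgq, hg_def, integral_indicator_const _ hsm]
    simp [Measure.real]
  rw [funext hfg, hintg] at happ
  have hintf : ∫ x, f x ≤ ∫ x, |f x| := by
    apply integral_mono (hf.integrable_of_hasCompactSupport hcs)
      ((hf.abs).integrable_of_hasCompactSupport (hcs.comp_left (g := abs) abs_zero))
    exact fun x => le_abs_self _
  have hIq : 0 ≤ ∫ x, |f x| ^ q :=
    integral_nonneg (fun x => Real.rpow_nonneg (abs_nonneg _) q)
  have hm : 0 ≤ (volume s).toReal := ENNReal.toReal_nonneg
  have hstep : (∫ x, f x) ^ q ≤ ((∫ x, |f x| ^ q) ^ (1/q) * (volume s).toReal ^ (1/q')) ^ q :=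
    Real.rpow_le_rpow hnn (le_trans hintf happ) hq0.le
  refine le_trans hstep ?_
  rw [Real.mul_rpow (Real.rpow_nonneg hIq _) (Real.rpow_nonneg hm _),
    ← Real.rpow_mul hIq, ← Real.rpow_mul hm]
  have e1 : 1/q * q = 1 := by field_simp
  have e2 : 1/q' * q = q - 1 := by rw [hq'_def]; field_simp
  rw [e1, e2, Real.rpow_one]

/-- differentiation of a parameter-dependent integral. -/
lemma param_hasDerivAt {T R l : ℝ} (hR : 0 < R) (hl : 0 < l)
    (w w' : ℝ → E2 → ℝ)
    (hwcont : ∀ t ∈ Ioo (0:ℝ) T, ∀ x : E2, ContinuousAt (fun z : ℝ × E2 => w z.1 z.2) (t, x))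
    (hw'cont : ∀ t ∈ Ioo (0:ℝ) T, ∀ x : E2, ContinuousAt (fun z : ℝ × E2 => w' z.1 z.2) (t, x))
    (hder : ∀ s ∈ Ioo (0:ℝ) T, ∀ x : E2, HasDerivAt (fun r => w r x) (w' s x) s)
    (hvan : ∀ t' ∈ Ioo (0:ℝ) T, ∀ s ∈ Ioo (0:ℝ) t', ∀ x : E2, R + phi l t' < ‖x‖ →
        w s x = 0 ∧ w' s x = 0)
    {t₀ : ℝ} (ht₀ : t₀ ∈ Ioo (0:ℝ) T) :
    HasDerivAt (fun t => ∫ x, w t x) (∫ x, w' t₀ x) t₀ := by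
  obtain ⟨ht₀0, ht₀T⟩ := ht₀
  set δ : ℝ := min (t₀/2) ((T - t₀)/4) with hδ_def
  have hδ : 0 < δ := lt_min (by linarith) (by linarith)
  have hδ1 : δ ≤ t₀/2 := min_le_left _ _
  have hδ2 : δ ≤ (T - t₀)/4 := min_le_right _ _
  set t₁ : ℝ := t₀ + 2*δ with ht₁_def
  have ht₁T : t₁ < T := by rw [ht₁_def]; linarith
  have ht₁0 : 0 < t₁ := by rw [ht₁_def]; linarith
  have ht₁mem : t₁ ∈ Ioo (0:ℝ) T := ⟨ht₁0, ht₁T⟩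
  set Kr : ℝ := R + phi l t₁ with hKr_def
  set Kc : Set E2 := Metric.closedBall 0 Kr with hKc_def
  set J : Set ℝ := Icc (t₀ - δ) (t₀ + δ) with hJ_def
  have hJsub : ∀ s ∈ J, s ∈ Ioo (0:ℝ) T := by
    rintro s ⟨hs1, hs2⟩
    constructor <;> [linarith; linarith]
  have hJsub1 : ∀ s ∈ J, s ∈ Ioo (0:ℝ) t₁ := by
    rintro s ⟨hs1, hs2⟩
    constructor <;> [linarith; (rw [ht₁_def]; linarith)]
  have hballJ : Metric.ball t₀ δ ⊆ J := by
    intro s hs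
    rw [Metric.mem_ball, Real.dist_eq, abs_lt] at hs
    exact ⟨by linarith [hs.1], by linarith [hs.2]⟩
  have hcompact : IsCompact (J ×ˢ Kc) :=
    (isCompact_Icc).prod (isCompact_closedBall _ _)
  have hcontOn : ContinuousOn (fun z : ℝ × E2 => w' z.1 z.2) (J ×ˢ Kc) := by
    intro z hz
    exact (hw'cont z.1 (hJsub z.1 hz.1) z.2).continuousWithinAt
  obtain ⟨M, hM⟩ := hcompact.exists_bound_of_continuousOn hcontOn
  have hslice_cont : ∀ s ∈ Ioo (0:ℝ) T, Continuous (w s) := by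
    intro s hs
    refine continuous_iff_continuousAt.2 fun x => ?_
    exact (hwcont s hs x).comp (Continuous.continuousAt (continuous_const.prodMk continuous_id))
  have hslice_cont' : ∀ s ∈ Ioo (0:ℝ) T, Continuous (w' s) := by
    intro s hs
    refine continuous_iff_continuousAt.2 fun x => ?_
    exact (hw'cont s hs x).comp (Continuous.continuousAt (continuous_const.prodMk continuous_id))
  have hw_supp : ∀ s ∈ Ioo (0:ℝ) t₁, Function.support (w s) ⊆ Kc := by
    intro s hs x hx
    by_contra hxK
    have hnorm : Kr < ‖x‖ := by
      rw [hKc_def, Metric.mem_closedBall, dist_zero_right, not_le] at hxK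
      exact hxK
    exact hx ((hvan t₁ ht₁mem s hs x hnorm).1)
  have happ := hasDerivAt_integral_of_dominated_loc_of_deriv_le (F := fun t x => w t x)
    (F' := fun t x => w' t x) (x₀ := t₀) (bound := Kc.indicator (fun _ => M))
    (μ := volume) (Metric.ball_mem_nhds t₀ hδ) ?_ ?_ ?_ ?_ ?_ ?_
  · exact happ.2
  · filter_upwards [isOpen_Ioo.eventually_mem ⟨ht₀0, ht₀T⟩] with s hs
    exact (hslice_cont s hs).aestronglyMeasurable
  · refine ((hslice_cont t₀ ⟨ht₀0, ht₀T⟩).integrable_of_hasCompactSupport ?_)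
    exact hcs_of_support_subset (hw_supp t₀ ⟨ht₀0, by rw [ht₁_def]; linarith⟩)
  · exact (hslice_cont' t₀ ⟨ht₀0, ht₀T⟩).aestronglyMeasurable
  · refine Filter.Eventually.of_forall fun x => fun s hs => ?_
    have hsJ : s ∈ J := hballJ hs
    by_cases hxK : x ∈ Kc
    · have := hM (s, x) ⟨hsJ, hxK⟩
      rw [Set.indicator_of_mem hxK]
      exact this
    · have hnorm : Kr < ‖x‖ := by
        rw [hKc_def, Metric.mem_closedBall, dist_zero_right, not_le] at hxK
        exact hxK
      rw [Set.indicator_of_notMem hxK]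
      show ‖w' s x‖ ≤ 0
      rw [(hvan t₁ ht₁mem s (hJsub1 s hsJ) x hnorm).2]
      simp
  · rw [integrable_indicator_iff (measurableSet_closedBall)]
    exact integrableOn_const measure_closedBall_lt_top.ne
  · refine Filter.Eventually.of_forall fun x => fun s hs => ?_
    exact hder s (hJsub s (hballJ hs)) x

/-- convergence of a parameter-dependent integral as `t → 0⁺`. -/
lemma param_tendsto {T T' : ℝ} (w : ℝ → E2 → ℝ) (w0 : E2 → ℝ)
    (hT' : T' ∈ Ioo (0:ℝ) T) (M : ℝ) (K : Set E2) (hK : MeasurableSet K)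
    (hKfin : volume K ≠ ⊤)
    (hbd : ∀ t ∈ Ioo (0:ℝ) T', ∀ x, ‖w t x‖ ≤ K.indicator (fun _ => M) x)
    (hmeas : ∀ t ∈ Ioo (0:ℝ) T', AEStronglyMeasurable (w t) volume)
    (hconv : ∀ x, Filter.Tendsto (fun t => w t x) (nhdsWithin (0:ℝ) (Ioi 0)) (nhds (w0 x))) :
    Filter.Tendsto (fun t => ∫ x, w t x) (nhdsWithin (0:ℝ) (Ioi 0)) (nhds (∫ x, w0 x)) := by
  have hev : ∀ᶠ t in nhdsWithin (0:ℝ) (Ioi 0), t ∈ Ioo (0:ℝ) T' :=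
    Ioo_mem_nhdsGT_of_mem ⟨le_refl 0, hT'.1⟩
  apply tendsto_integral_filter_of_dominated_convergence (K.indicator (fun _ => M))
  · filter_upwards [hev] with t ht
    exact hmeas t ht
  · filter_upwards [hev] with t ht
    exact Filter.Eventually.of_forall (hbd t ht)
  · rw [integrable_indicator_iff hK]
    exact integrableOn_const hKfin
  · exact Filter.Eventually.of_forall hconv

lemma lap_tsupport_zero {f : E2 → ℝ} {x : E2} (hx : x ∉ tsupport f) : lap f x = 0 := by
  unfold lap
  refine Finset.sum_eq_zero fun i _ => ?_
  apply fderiv_apply_zero_of_not_mem_tsupport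
  intro hxx
  apply hx
  refine closure_minimal ?_ (isClosed_closure) hxx
  intro y hy
  by_contra hyt
  apply hy
  show fderiv ℝ f y (EuclideanSpace.single i 1) = 0
  exact fderiv_apply_zero_of_not_mem_tsupport hyt _

lemma lap_hcs {f : E2 → ℝ} (hcs : HasCompactSupport f) : HasCompactSupport (lap f) := by
  apply hcs.mono'
  intro x hx
  by_contra hxt
  exact hx (lap_tsupport_zero hxt)

lemma lap_cont {f : E2 → ℝ} (hf : ContDiff ℝ 2 f) : Continuous (lap f) := by
  unfold lap
  apply continuous_finset_sum
  intro i _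
  have hg : ContDiff ℝ 1 (fun y => fderiv ℝ f y (EuclideanSpace.single i 1)) :=
    (hf.fderiv_right (m := 1) (by norm_num)).clm_apply contDiff_const
  exact (hg.continuous_fderiv one_ne_zero).clm_apply continuous_const

end Aux

/-- Lifespan estimate for the two-dimensional generalized Tricomi equation with
combined nonlinearity, for `1 < q < 2(ℓ+1)/(2ℓ+1)` and a second datum with
positive integral: `T ≤ C ε^{−((q+1)/(q−1) − 2(ℓ+1))⁻¹}`. -/
theorem blowup_generalized_tricomi_combined_dim_two
    (l : ℝ) (hl : 0 < l)
    (p q : ℝ) (hp : 1 < p) (hq : 1 < q) (hq2 : q < 2*(l+1)/(2*l+1))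
    (u0 u1 : EuclideanSpace ℝ (Fin 2) → ℝ)
    (hu0c : Continuous u0) (hu1c : Continuous u1)
    (hu0n : ∀ x, 0 ≤ u0 x) (hu1n : ∀ x, 0 ≤ u1 x)
    (R : ℝ) (hR : 0 < R)
    (hs0 : Function.support u0 ⊆ Metric.closedBall 0 R)
    (hs1 : Function.support u1 ⊆ Metric.closedBall 0 R)
    (hint : 0 < ∫ x : EuclideanSpace ℝ (Fin 2), u1 x) :
    ∃ ε0 > (0:ℝ), ∃ C > (0:ℝ), ∀ ε ∈ Ioc (0:ℝ) ε0, ∀ T > (0:ℝ),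
      ∀ u : ℝ → EuclideanSpace ℝ (Fin 2) → ℝ,
        IsClassicalSolution 2 l R ε p q T u0 u1 u →
        T ≤ C * ε ^ (-((q+1)/(q-1) - 2*(l+1))⁻¹) := by
  -- constants
  have hq1 : (0:ℝ) < q - 1 := by linarith
  have hl1 : (0:ℝ) < l + 1 := by linarith
  set I₁ : ℝ := ∫ x : EuclideanSpace ℝ (Fin 2), u1 x with hI₁_def
  set m₁ : ℝ := (volume (Metric.closedBall (0:E2) 1)).toReal with hm₁_def
  have hm₁ : 0 < m₁ := vol_ball_pos
  set c₁ : ℝ := R + 1/(l+1) with hc₁_def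
  have hc₁ : 0 < c₁ := by positivity
  set a : ℝ := 2*(l+1)*(q-1) with ha_def
  have ha : 0 ≤ a := by positivity
  have hq2' : q*(2*l+1) < 2*(l+1) := by
    have h2l : (0:ℝ) < 2*l+1 := by linarith
    exact (lt_div_iff₀ h2l).1 hq2
  have he : 0 < q + 1 - a := by rw [ha_def]; nlinarith
  set c₃ : ℝ := (c₁^2 * m₁)^(q-1) with hc₃_def
  have hc₃ : 0 < c₃ := Real.rpow_pos_of_pos (by positivity) _
  set A : ℝ := c₃⁻¹ with hA_def
  have hA : 0 < A := by positivity
  set β : ℝ := (q-1)/(q+1-a) with hβ_def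
  have hβ : 0 < β := div_pos hq1 he
  set D : ℝ := odeD q a A with hD_def
  have hD : 0 < D := odeD_pos hq hA
  have hI₁β : 0 < I₁ ^ (-β) := Real.rpow_pos_of_pos hint _
  set C : ℝ := 4 + D * I₁^(-β) with hC_def
  have hC : 0 < C := by positivity
  refine ⟨1, one_pos, C, hC, ?_⟩
  rintro ε ⟨hεpos, hε1⟩ T hT u hu
  obtain ⟨hreg, heq, hinit0, hinit1, hsupp⟩ := hu
  -- basic geometry of the domain
  set S : Set (ℝ × E2) := (Ico (0:ℝ) T) ×ˢ (univ : Set E2) with hS_def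
  have hSopen : IsOpen ((Ioo (0:ℝ) T) ×ˢ (univ : Set E2)) := isOpen_Ioo.prod isOpen_univ
  have hsubS : (Ioo (0:ℝ) T) ×ˢ (univ : Set E2) ⊆ S :=
    prod_mono Ioo_subset_Ico_self (subset_refl _)
  set U : ℝ × E2 → ℝ := fun z => u z.1 z.2 with hU_def
  have hUo : ContDiffOn ℝ 2 U ((Ioo (0:ℝ) T) ×ˢ (univ : Set E2)) := hreg.mono hsubS
  have hmemo : ∀ t ∈ Ioo (0:ℝ) T, ∀ x : E2,
      ((Ioo (0:ℝ) T) ×ˢ (univ : Set E2)) ∈ nhds ((t, x) : ℝ × E2) := fun t ht x =>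
    hSopen.mem_nhds (mk_mem_prod ht (mem_univ x))
  have hUat : ∀ t ∈ Ioo (0:ℝ) T, ∀ x : E2, ContDiffAt ℝ 2 U (t, x) := fun t ht x =>
    hUo.contDiffAt (hmemo t ht x)
  have hcurve : ∀ (t : ℝ) (x : E2), HasDerivAt (fun s : ℝ => ((s, x) : ℝ × E2)) (1, 0) t :=
    fun t x => (hasDerivAt_id t).prodMk (hasDerivAt_const t x)
  -- first time derivative
  set V : ℝ × E2 → ℝ := fun z => fderiv ℝ U z (1, 0) with hV_def
  have hB1 : ∀ t ∈ Ioo (0:ℝ) T, ∀ x : E2, HasDerivAt (fun s => u s x) (V (t,x)) t := by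
    intro t ht x
    have hdU : DifferentiableAt ℝ U (t,x) := ((hUat t ht x).differentiableAt (by norm_num))
    exact hdU.hasFDerivAt.comp_hasDerivAt t (hcurve t x)
  have hut_eq : ∀ t ∈ Ioo (0:ℝ) T, ∀ x : E2, deriv (fun s => u s x) t = V (t,x) :=
    fun t ht x => (hB1 t ht x).deriv
  have hVc1 : ContDiffOn ℝ 1 (fun z => fderiv ℝ U z) ((Ioo (0:ℝ) T) ×ˢ (univ : Set E2)) :=
    hUo.fderiv_of_isOpen hSopen (by norm_num)
  have hVc1' : ContDiffOn ℝ 1 V ((Ioo (0:ℝ) T) ×ˢ (univ : Set E2)) :=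
    hVc1.clm_apply contDiffOn_const
  have hVcont : ContinuousOn V ((Ioo (0:ℝ) T) ×ˢ (univ : Set E2)) := hVc1'.continuousOn
  -- second time derivative
  set Wf : ℝ × E2 → ℝ := fun z => fderiv ℝ V z (1,0) with hW_def
  have hWcont : ContinuousOn Wf ((Ioo (0:ℝ) T) ×ˢ (univ : Set E2)) :=
    (hVc1'.continuousOn_fderiv_of_isOpen hSopen le_rfl).clm_apply continuousOn_const
  have hB3 : ∀ t ∈ Ioo (0:ℝ) T, ∀ x : E2,
      HasDerivAt (fun s => deriv (fun r => u r x) s) (Wf (t,x)) t := by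
    intro t ht x
    have hVdiff : DifferentiableAt ℝ V (t,x) :=
      ((hVc1'.contDiffAt (hmemo t ht x)).differentiableAt one_ne_zero)
    have hline : HasDerivAt (fun s => V (s,x)) (Wf (t,x)) t :=
      by have h := hVdiff.hasFDerivAt.comp_hasDerivAt t (hcurve t x); exact h
    apply hline.congr_of_eventuallyEq
    filter_upwards [isOpen_Ioo.eventually_mem ht] with s hs
    exact hut_eq s hs x
  have hutt_eq : ∀ t ∈ Ioo (0:ℝ) T, ∀ x : E2,
      deriv (fun s => deriv (fun r => u r x) s) t = Wf (t,x) :=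
    fun t ht x => (hB3 t ht x).deriv
  -- within-derivative at time 0
  have hSuniq : UniqueDiffOn ℝ S := (uniqueDiffOn_Ico 0 T).prod uniqueDiffOn_univ
  set Vw : ℝ × E2 → ℝ := fun z => fderivWithin ℝ U S z (1, 0) with hVw_def
  have hVwcont : ContinuousOn Vw S :=
    ((hreg.fderivWithin (m := 1) hSuniq (by norm_num)).continuousOn).clm_apply continuousOn_const
  have hVweq : ∀ t ∈ Ioo (0:ℝ) T, ∀ x : E2, Vw (t,x) = V (t,x) := by
    intro t ht x
    have hfw : fderivWithin ℝ U S (t,x) = fderiv ℝ U (t,x) :=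
      fderivWithin_of_mem_nhds (Filter.mem_of_superset (hmemo t ht x) hsubS)
    show fderivWithin ℝ U S (t,x) (1,0) = fderiv ℝ U (t,x) (1,0)
    rw [hfw]
  have hVw0 : ∀ x : E2, Vw (0,x) = ε * u1 x := by
    intro x
    have h0S : ((0:ℝ), x) ∈ S := mk_mem_prod (left_mem_Ico.2 hT) (mem_univ x)
    have hdW : DifferentiableWithinAt ℝ U S (0,x) :=
      (hreg.differentiableOn (by norm_num)) _ h0S
    have hFd : HasFDerivWithinAt U (fderivWithin ℝ U S (0,x)) S (0,x) := hdW.hasFDerivWithinAt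
    have hcurve0 : HasDerivWithinAt (fun s : ℝ => ((s, x) : ℝ × E2)) (1, 0) (Ico (0:ℝ) T) 0 :=
      (hcurve 0 x).hasDerivWithinAt
    have hmaps : MapsTo (fun s : ℝ => ((s, x) : ℝ × E2)) (Ico (0:ℝ) T) S :=
      fun s hs => mk_mem_prod hs (mem_univ x)
    have hcomp : HasDerivWithinAt (fun s => u s x) (Vw (0,x)) (Ico (0:ℝ) T) 0 :=
      by have h := hFd.comp_hasDerivWithinAt 0 hcurve0 hmaps; exact h
    have hIco : Ico (0:ℝ) T ∈ nhdsWithin (0:ℝ) (Ici 0) :=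
      Ico_mem_nhdsGE_of_mem ⟨le_refl 0, hT⟩
    have hcomp' : HasDerivWithinAt (fun s => u s x) (Vw (0,x)) (Ici (0:ℝ)) 0 :=
      hcomp.mono_of_mem_nhdsWithin hIco
    have hder := hcomp'.derivWithin (uniqueDiffOn_Ici 0 0 self_mem_Ici)
    rw [← hder]
    exact hinit1 x
  -- vanishing outside the light cone
  have hphi_nonneg : ∀ {s : ℝ}, 0 ≤ s → 0 ≤ phi l s := by
    intro s hs; unfold phi; positivity
  have hphi_mono : ∀ {s t' : ℝ}, 0 ≤ s → s ≤ t' → phi l s ≤ phi l t' := by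
    intro s t' hs hst
    unfold phi
    exact (div_le_div_iff_of_pos_right hl1).2 (Real.rpow_le_rpow hs hst (by linarith))
  have huzero : ∀ {t : ℝ}, t ∈ Ico (0:ℝ) T → ∀ {x : E2}, R + phi l t < ‖x‖ → u t x = 0 := by
    intro t ht x hx
    by_contra hne
    have hmem := hsupp t ht hne
    rw [Metric.mem_closedBall, dist_zero_right] at hmem
    linarith
  have hut_zero : ∀ {t' : ℝ}, t' ∈ Ioo (0:ℝ) T → ∀ {s : ℝ}, s ∈ Ioo (0:ℝ) t' →
      ∀ {x : E2}, R + phi l t' < ‖x‖ → deriv (fun r => u r x) s = 0 := by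
    intro t' ht' s hs x hx
    have hev : (fun r => u r x) =ᶠ[nhds s] (fun _ => 0) := by
      filter_upwards [isOpen_Ioo.eventually_mem hs] with r hr
      apply huzero ⟨hr.1.le, lt_trans hr.2 ht'.2⟩
      have := hphi_mono hr.1.le (le_of_lt hr.2)
      linarith
    rw [hev.deriv_eq]
    exact deriv_const s 0
  have hutt_zero : ∀ {t' : ℝ}, t' ∈ Ioo (0:ℝ) T → ∀ {s : ℝ}, s ∈ Ioo (0:ℝ) t' →
      ∀ {x : E2}, R + phi l t' < ‖x‖ →
      deriv (fun r => deriv (fun r' => u r' x) r) s = 0 := by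
    intro t' ht' s hs x hx
    have hev : (fun r => deriv (fun r' => u r' x) r) =ᶠ[nhds s] (fun _ => 0) := by
      filter_upwards [isOpen_Ioo.eventually_mem hs] with r hr
      exact hut_zero ht' hr hx
    rw [hev.deriv_eq]
    exact deriv_const s 0
  -- joint continuity of the time derivatives
  have hu_jointcont : ∀ t ∈ Ioo (0:ℝ) T, ∀ x : E2,
      ContinuousAt (fun z : ℝ × E2 => u z.1 z.2) (t,x) := fun t ht x =>
    (hUat t ht x).continuousAt
  have hut_jointcont : ∀ t ∈ Ioo (0:ℝ) T, ∀ x : E2,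
      ContinuousAt (fun z : ℝ × E2 => deriv (fun r => u r z.2) z.1) (t,x) := by
    intro t ht x
    have hVat : ContinuousAt V (t,x) := hVcont.continuousAt (hmemo t ht x)
    apply hVat.congr
    filter_upwards [hmemo t ht x] with z hz
    have := hut_eq z.1 hz.1 z.2
    simpa using this.symm
  have hutt_jointcont : ∀ t ∈ Ioo (0:ℝ) T, ∀ x : E2,
      ContinuousAt (fun z : ℝ × E2 => deriv (fun s => deriv (fun r => u r z.2) s) z.1) (t,x) := by
    intro t ht x
    have hWat : ContinuousAt Wf (t,x) := hWcont.continuousAt (hmemo t ht x)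
    apply hWat.congr
    filter_upwards [hmemo t ht x] with z hz
    have := hutt_eq z.1 hz.1 z.2
    simpa using this.symm
  -- pointwise derivatives restated
  have hder1 : ∀ s ∈ Ioo (0:ℝ) T, ∀ x : E2,
      HasDerivAt (fun r => u r x) (deriv (fun r => u r x) s) s := by
    intro s hs x
    have h := hB1 s hs x
    rwa [← hut_eq s hs x] at h
  have hder2 : ∀ s ∈ Ioo (0:ℝ) T, ∀ x : E2,
      HasDerivAt (fun r => deriv (fun r' => u r' x) r)
        (deriv (fun r => deriv (fun r' => u r' x) r) s) s := by
    intro s hs x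
    have h := hB3 s hs x
    rwa [← hutt_eq s hs x] at h
  -- the two parametric derivatives
  have hvan1 : ∀ t' ∈ Ioo (0:ℝ) T, ∀ s ∈ Ioo (0:ℝ) t', ∀ x : E2, R + phi l t' < ‖x‖ →
      u s x = 0 ∧ deriv (fun r => u r x) s = 0 := by
    intro t' ht' s hs x hx
    constructor
    · apply huzero ⟨hs.1.le, lt_trans hs.2 ht'.2⟩
      have := hphi_mono hs.1.le (le_of_lt hs.2)
      linarith
    · exact hut_zero ht' hs hx
  have hvan2 : ∀ t' ∈ Ioo (0:ℝ) T, ∀ s ∈ Ioo (0:ℝ) t', ∀ x : E2, R + phi l t' < ‖x‖ →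
      deriv (fun r => u r x) s = 0 ∧ deriv (fun r => deriv (fun r' => u r' x) r) s = 0 := by
    intro t' ht' s hs x hx
    exact ⟨hut_zero ht' hs hx, hutt_zero ht' hs hx⟩
  have hdF : ∀ t₀ ∈ Ioo (0:ℝ) T,
      HasDerivAt (fun t => ∫ x, u t x) (∫ x, deriv (fun r => u r x) t₀) t₀ := by
    intro t₀ ht₀
    exact param_hasDerivAt hR hl u (fun s x => deriv (fun r => u r x) s)
      hu_jointcont hut_jointcont hder1 hvan1 ht₀
  have hdF1 : ∀ t₀ ∈ Ioo (0:ℝ) T,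
      HasDerivAt (fun t => ∫ x, deriv (fun r => u r x) t)
        (∫ x, deriv (fun s => deriv (fun r => u r x) s) t₀) t₀ := by
    intro t₀ ht₀
    exact param_hasDerivAt hR hl (fun s x => deriv (fun r => u r x) s)
      (fun s x => deriv (fun r => deriv (fun r' => u r' x) r) s)
      hut_jointcont hutt_jointcont hder2 hvan2 ht₀
  -- slices : regularity, supports, integrability
  have hu_cd2 : ∀ t ∈ Ioo (0:ℝ) T, ContDiff ℝ 2 (u t) := by
    intro t ht
    have : ContDiff ℝ 2 (fun x : E2 => U (t, x)) :=
      contDiff_iff_contDiffAt.2 fun x =>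
        (hUat t ht x).comp x (contDiffAt_const.prodMk contDiffAt_id)
    exact this
  have hu_cs : ∀ t ∈ Ioo (0:ℝ) T, HasCompactSupport (u t) := fun t ht =>
    hcs_of_support_subset (hsupp t ⟨ht.1.le, ht.2⟩)
  have hu_cont : ∀ t ∈ Ioo (0:ℝ) T, Continuous (u t) := fun t ht => (hu_cd2 t ht).continuous
  have hut_cont : ∀ t ∈ Ioo (0:ℝ) T, Continuous (fun x : E2 => deriv (fun r => u r x) t) := by
    intro t ht
    refine continuous_iff_continuousAt.2 fun x => ?_
    exact (hut_jointcont t ht x).comp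
      (Continuous.continuousAt (continuous_const.prodMk continuous_id))
  have hutt_cont : ∀ t ∈ Ioo (0:ℝ) T,
      Continuous (fun x : E2 => deriv (fun s => deriv (fun r => u r x) s) t) := by
    intro t ht
    refine continuous_iff_continuousAt.2 fun x => ?_
    exact (hutt_jointcont t ht x).comp
      (Continuous.continuousAt (continuous_const.prodMk continuous_id))
  have hmid : ∀ t ∈ Ioo (0:ℝ) T, ((t+T)/2) ∈ Ioo (0:ℝ) T ∧ t ∈ Ioo (0:ℝ) ((t+T)/2) := by
    intro t ht
    exact ⟨⟨by linarith [ht.1], by linarith [ht.2]⟩, ⟨ht.1, by linarith [ht.2]⟩⟩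
  have hut_supp : ∀ t ∈ Ioo (0:ℝ) T, Function.support (fun x : E2 => deriv (fun r => u r x) t)
      ⊆ Metric.closedBall 0 (R + phi l ((t+T)/2)) := by
    intro t ht x hx
    by_contra hxmem
    rw [Metric.mem_closedBall, dist_zero_right, not_le] at hxmem
    exact hx (hut_zero (hmid t ht).1 (hmid t ht).2 hxmem)
  have hutt_supp : ∀ t ∈ Ioo (0:ℝ) T,
      Function.support (fun x : E2 => deriv (fun s => deriv (fun r => u r x) s) t)
      ⊆ Metric.closedBall 0 (R + phi l ((t+T)/2)) := by
    intro t ht x hx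
    by_contra hxmem
    rw [Metric.mem_closedBall, dist_zero_right, not_le] at hxmem
    exact hx (hutt_zero (hmid t ht).1 (hmid t ht).2 hxmem)
  -- the key identity for the second derivative of F
  have hp0 : (0:ℝ) < p := by linarith
  have hq0 : (0:ℝ) < q := by linarith
  have hint_p : ∀ t ∈ Ioo (0:ℝ) T, Integrable (fun x : E2 => |deriv (fun r => u r x) t| ^ p) := by
    intro t ht
    refine Continuous.integrable_of_hasCompactSupport
      (((hut_cont t ht).abs).rpow_const (fun x => Or.inr hp0.le)) ?_
    apply hcs_of_support_subset (ρ := R + phi l ((t+T)/2))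
    intro x hx
    apply hut_supp t ht
    intro hzero
    apply hx
    have hzero' : deriv (fun r => u r x) t = 0 := hzero
    show |deriv (fun r => u r x) t| ^ p = 0
    rw [hzero', abs_zero, Real.zero_rpow hp0.ne']
  have hint_q : ∀ t ∈ Ioo (0:ℝ) T, Integrable (fun x : E2 => |u t x| ^ q) := by
    intro t ht
    refine Continuous.integrable_of_hasCompactSupport
      (((hu_cont t ht).abs).rpow_const (fun x => Or.inr hq0.le)) ?_
    apply hcs_of_support_subset (ρ := R + phi l t)
    intro x hx
    apply hsupp t ⟨ht.1.le, ht.2⟩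
    intro hzero
    apply hx
    have hzero' : u t x = 0 := hzero
    show |u t x| ^ q = 0
    rw [hzero', abs_zero, Real.zero_rpow hq0.ne']
  have hint_lap : ∀ t ∈ Ioo (0:ℝ) T, Integrable (lap (u t)) := fun t ht =>
    (lap_cont (hu_cd2 t ht)).integrable_of_hasCompactSupport (lap_hcs (hu_cs t ht))
  have hF2eq : ∀ t ∈ Ioo (0:ℝ) T,
      (∫ x, deriv (fun s => deriv (fun r => u r x) s) t)
        = (∫ x, |deriv (fun r => u r x) t| ^ p) + ∫ x, |u t x| ^ q := by
    intro t ht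
    have hPDE : ∀ x : E2, deriv (fun s => deriv (fun r => u r x) s) t
        = t^(2*l) * lap (u t) x + (|deriv (fun s => u s x) t| ^ p + |u t x| ^ q) := by
      intro x
      have h := heq t ht x
      linarith
    rw [funext hPDE]
    have hgint : Integrable (fun x : E2 => |deriv (fun r => u r x) t| ^ p + |u t x| ^ q) :=
      (hint_p t ht).add (hint_q t ht)
    have hfint : Integrable (fun x : E2 => t^(2*l) * lap (u t) x) := (hint_lap t ht).const_mul _
    rw [integral_add hfint hgint, integral_add (hint_p t ht) (hint_q t ht),
      integral_const_mul, integral_lap_eq_zero (hu_cd2 t ht) (hu_cs t ht), mul_zero, zero_add]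
  have hF2nonneg : ∀ t ∈ Ioo (0:ℝ) T,
      0 ≤ ∫ x, deriv (fun s => deriv (fun r => u r x) s) t := by
    intro t ht
    rw [hF2eq t ht]
    have h1 : 0 ≤ ∫ x, |deriv (fun r => u r x) t| ^ p :=
      integral_nonneg fun x => Real.rpow_nonneg (abs_nonneg _) _
    have h2 : 0 ≤ ∫ x, |u t x| ^ q :=
      integral_nonneg fun x => Real.rpow_nonneg (abs_nonneg _) _
    linarith
  -- monotonicity of F1
  have hF1mono : ∀ s t : ℝ, s ∈ Ioo (0:ℝ) T → t ∈ Ioo (0:ℝ) T → s ≤ t →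
      (∫ x, deriv (fun r => u r x) s) ≤ ∫ x, deriv (fun r => u r x) t := by
    intro s t hs ht hst
    apply mono_of_hasDerivAt_nonneg (W := fun r => ∫ x, deriv (fun r' => u r' x) r)
      (W' := fun r => ∫ x, deriv (fun s' => deriv (fun r' => u r' x) s') r) hst
    · intro r hr
      exact hdF1 r ⟨lt_of_lt_of_le hs.1 hr.1, lt_of_le_of_lt hr.2 ht.2⟩
    · intro r hr
      exact hF2nonneg r ⟨lt_of_lt_of_le hs.1 hr.1, lt_of_le_of_lt hr.2 ht.2⟩
  -- limits at 0⁺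
  have hT2 : T/2 ∈ Ioo (0:ℝ) T := ⟨by linarith, by linarith⟩
  set K₀ : Set E2 := Metric.closedBall 0 (R + phi l (T/2)) with hK₀_def
  have hK₀meas : MeasurableSet K₀ := measurableSet_closedBall
  have hK₀fin : volume K₀ ≠ ⊤ := measure_closedBall_lt_top.ne
  have hC₀subS : (Icc (0:ℝ) (T/2)) ×ˢ K₀ ⊆ S := by
    rintro ⟨s, x⟩ ⟨hs, _⟩
    exact mk_mem_prod ⟨hs.1, lt_of_le_of_lt hs.2 hT2.2⟩ (mem_univ x)
  have hC₀cpt : IsCompact ((Icc (0:ℝ) (T/2)) ×ˢ K₀) :=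
    isCompact_Icc.prod (isCompact_closedBall _ _)
  obtain ⟨M₀, hM₀⟩ := hC₀cpt.exists_bound_of_continuousOn (hreg.continuousOn.mono hC₀subS)
  obtain ⟨M₁, hM₁⟩ := hC₀cpt.exists_bound_of_continuousOn (hVwcont.mono hC₀subS)
  have htendF : Filter.Tendsto (fun t => ∫ x, u t x) (nhdsWithin (0:ℝ) (Ioi 0))
      (nhds (∫ x, u 0 x)) := by
    apply param_tendsto u (u 0) hT2 M₀ K₀ hK₀meas hK₀fin
    · intro t ht x
      by_cases hx : x ∈ K₀
      · rw [Set.indicator_of_mem hx]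
        exact hM₀ (t, x) ⟨⟨ht.1.le, ht.2.le⟩, hx⟩
      · rw [Set.indicator_of_notMem hx]
        have hxn : R + phi l (T/2) < ‖x‖ := by
          rw [hK₀_def, Metric.mem_closedBall, dist_zero_right, not_le] at hx
          exact hx
        have : u t x = 0 := by
          apply huzero ⟨ht.1.le, lt_trans ht.2 hT2.2⟩
          have := hphi_mono ht.1.le ht.2.le
          linarith
        rw [this]; simp
    · intro t ht
      exact (hu_cont t ⟨ht.1, lt_trans ht.2 hT2.2⟩).aestronglyMeasurable
    · intro x
      have h0S : ((0:ℝ), x) ∈ S := mk_mem_prod (left_mem_Ico.2 hT) (mem_univ x)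
      have hUc0 : ContinuousWithinAt U S (0, x) := hreg.continuousOn _ h0S
      have hmap : Filter.Tendsto (fun t : ℝ => ((t, x) : ℝ × E2)) (nhdsWithin (0:ℝ) (Ioi 0))
          (nhdsWithin ((0:ℝ), x) S) := by
        apply tendsto_nhdsWithin_of_tendsto_nhds_of_eventually_within
        · exact ((continuous_id.prodMk continuous_const).tendsto 0).mono_left nhdsWithin_le_nhds
        · filter_upwards [Ioo_mem_nhdsGT_of_mem (⟨le_refl 0, hT⟩ : (0:ℝ) ∈ Ico 0 T)] with s hs
          exact mk_mem_prod ⟨hs.1.le, hs.2⟩ (mem_univ x)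
      exact hUc0.tendsto.comp hmap
  have htendF1 : Filter.Tendsto (fun t => ∫ x, deriv (fun r => u r x) t)
      (nhdsWithin (0:ℝ) (Ioi 0)) (nhds (ε * I₁)) := by
    have hεI : ε * I₁ = ∫ x, ε * u1 x := by rw [integral_const_mul]
    rw [hεI]
    apply param_tendsto (fun t x => deriv (fun r => u r x) t) (fun x => ε * u1 x)
      hT2 M₁ K₀ hK₀meas hK₀fin
    · intro t ht x
      by_cases hx : x ∈ K₀
      · rw [Set.indicator_of_mem hx]
        have hVweq' : deriv (fun r => u r x) t = Vw (t,x) := by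
          rw [hut_eq t ⟨ht.1, lt_trans ht.2 hT2.2⟩ x,
            hVweq t ⟨ht.1, lt_trans ht.2 hT2.2⟩ x]
        rw [hVweq']
        exact hM₁ (t, x) ⟨⟨ht.1.le, ht.2.le⟩, hx⟩
      · rw [Set.indicator_of_notMem hx]
        have hxn : R + phi l (T/2) < ‖x‖ := by
          rw [hK₀_def, Metric.mem_closedBall, dist_zero_right, not_le] at hx
          exact hx
        rw [hut_zero hT2 ht hxn]
        simp
    · intro t ht
      exact (hut_cont t ⟨ht.1, lt_trans ht.2 hT2.2⟩).aestronglyMeasurable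
    · intro x
      have h0S : ((0:ℝ), x) ∈ S := mk_mem_prod (left_mem_Ico.2 hT) (mem_univ x)
      have hVwc0 : ContinuousWithinAt Vw S (0, x) := hVwcont _ h0S
      have hmap : Filter.Tendsto (fun t : ℝ => ((t, x) : ℝ × E2)) (nhdsWithin (0:ℝ) (Ioi 0))
          (nhdsWithin ((0:ℝ), x) S) := by
        apply tendsto_nhdsWithin_of_tendsto_nhds_of_eventually_within
        · exact ((continuous_id.prodMk continuous_const).tendsto 0).mono_left nhdsWithin_le_nhds
        · filter_upwards [Ioo_mem_nhdsGT_of_mem (⟨le_refl 0, hT⟩ : (0:ℝ) ∈ Ico 0 T)] with s hs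
          exact mk_mem_prod ⟨hs.1.le, hs.2⟩ (mem_univ x)
      have htend : Filter.Tendsto (fun t : ℝ => Vw (t, x)) (nhdsWithin (0:ℝ) (Ioi 0))
          (nhds (ε * u1 x)) := by
        rw [← hVw0 x]
        exact hVwc0.tendsto.comp hmap
      apply htend.congr'
      filter_upwards [Ioo_mem_nhdsGT_of_mem (⟨le_refl 0, hT⟩ : (0:ℝ) ∈ Ico 0 T)] with s hs
      rw [hut_eq s hs x, hVweq s hs x]
  -- lower bounds for F1 and F
  have hF1low : ∀ t ∈ Ioo (0:ℝ) T, ε * I₁ ≤ ∫ x, deriv (fun r => u r x) t := by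
    intro t ht
    apply le_of_tendsto htendF1
    filter_upwards [Ioo_mem_nhdsGT_of_mem (⟨le_refl 0, ht.1⟩ : (0:ℝ) ∈ Ico 0 t)] with s hs
    exact hF1mono s t ⟨hs.1, lt_trans hs.2 ht.2⟩ ht hs.2.le
  have hF0 : (0:ℝ) ≤ ∫ x, u 0 x := by
    have : (fun x : E2 => u 0 x) = fun x => ε * u0 x := funext hinit0
    rw [this, integral_const_mul]
    exact mul_nonneg hεpos.le (integral_nonneg hu0n)
  have hFlow : ∀ t ∈ Ioo (0:ℝ) T, (ε * I₁) * t ≤ ∫ x, u t x := by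
    intro t ht
    have hkey : ∀ s ∈ Ioo (0:ℝ) t,
        (∫ x, u s x) - (ε * I₁) * s ≤ (∫ x, u t x) - (ε * I₁) * t := by
      intro s hs
      apply mono_of_hasDerivAt_nonneg (W := fun r => (∫ x, u r x) - (ε * I₁) * r)
        (W' := fun r => (∫ x, deriv (fun r' => u r' x) r) - ε * I₁) hs.2.le
      · intro r hr
        have hrmem : r ∈ Ioo (0:ℝ) T := ⟨lt_of_lt_of_le hs.1 hr.1, lt_of_le_of_lt hr.2 ht.2⟩
        exact (hdF r hrmem).sub (by simpa using (hasDerivAt_id r).const_mul (ε * I₁))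
      · intro r hr
        have hrmem : r ∈ Ioo (0:ℝ) T := ⟨lt_of_lt_of_le hs.1 hr.1, lt_of_le_of_lt hr.2 ht.2⟩
        linarith [hF1low r hrmem]
    have htend0 : Filter.Tendsto (fun s => (∫ x, u s x) - (ε * I₁) * s)
        (nhdsWithin (0:ℝ) (Ioi 0)) (nhds ((∫ x, u 0 x) - (ε * I₁) * 0)) := by
      apply Filter.Tendsto.sub htendF
      have : Filter.Tendsto (fun s : ℝ => (ε * I₁) * s) (nhds (0:ℝ)) (nhds ((ε * I₁) * 0)) :=
        (continuous_const.mul continuous_id).tendsto 0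
      exact this.mono_left nhdsWithin_le_nhds
    have hlim : (∫ x, u 0 x) - (ε * I₁) * 0 ≤ (∫ x, u t x) - (ε * I₁) * t := by
      apply le_of_tendsto htend0
      filter_upwards [Ioo_mem_nhdsGT_of_mem (⟨le_refl 0, ht.1⟩ : (0:ℝ) ∈ Ico 0 t)] with s hs
      exact hkey s hs
    have := hF0
    nlinarith [hlim]
  -- the differential inequality
  have hF2low : ∀ t ∈ Ioo (0:ℝ) T, (1:ℝ) ≤ t →
      A * t ^ (-a) * (∫ x, u t x) ^ q ≤ ∫ x, deriv (fun s => deriv (fun r => u r x) s) t := by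
    intro t ht ht1
    have ht0 : (0:ℝ) < t := ht.1
    set X : ℝ := ∫ x, |u t x| ^ q with hX_def
    have hXnn : 0 ≤ X := integral_nonneg fun x => Real.rpow_nonneg (abs_nonneg _) _
    have hpint : 0 ≤ ∫ x, |deriv (fun r => u r x) t| ^ p :=
      integral_nonneg fun x => Real.rpow_nonneg (abs_nonneg _) _
    have hF2X : X ≤ ∫ x, deriv (fun s => deriv (fun r => u r x) s) t := by
      rw [hF2eq t ht]; linarith
    have hρt : 0 < R + phi l t := by
      have := hphi_nonneg ht0.le
      linarith
    have hFnn : 0 ≤ ∫ x, u t x := by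
      have := hFlow t ht
      nlinarith [mul_pos (mul_pos hεpos hint) ht0]
    have hold := holder_bound (hu_cont t ht) hρt hq (hsupp t ⟨ht0.le, ht.2⟩) hFnn
    -- volume bound
    have hmt : (volume (Metric.closedBall (0:E2) (R + phi l t))).toReal
        = (R + phi l t)^2 * m₁ := vol_ball_toReal hρt.le
    have htl : (1:ℝ) ≤ t ^ (l+1) := by
      calc (1:ℝ) = t ^ (0:ℝ) := (Real.rpow_zero t).symm
        _ ≤ t ^ (l+1) := Real.rpow_le_rpow_of_exponent_le ht1 (by linarith)
    have hρbound : R + phi l t ≤ c₁ * t ^ (l+1) := by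
      unfold phi
      rw [hc₁_def]
      have h1 : R ≤ R * t ^ (l+1) := by nlinarith
      have h2 : t ^ (l+1) / (l+1) = (1/(l+1)) * t ^ (l+1) := by ring
      nlinarith [htl]
    have ht2e : (t ^ ((l+1):ℝ))^2 = t ^ (2*(l+1)) := by
      rw [sq, ← Real.rpow_add ht0]; congr 1; ring
    have hmtb : (volume (Metric.closedBall (0:E2) (R + phi l t))).toReal
        ≤ c₁^2 * m₁ * t ^ (2*(l+1)) := by
      rw [hmt]
      have hsq : (R + phi l t)^2 ≤ (c₁ * t ^ (l+1))^2 := by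
        apply pow_le_pow_left₀ hρt.le hρbound
      calc (R + phi l t)^2 * m₁ ≤ (c₁ * t ^ (l+1))^2 * m₁ :=
            mul_le_mul_of_nonneg_right hsq hm₁.le
        _ = c₁^2 * m₁ * t ^ (2*(l+1)) := by rw [mul_pow, ht2e]; ring
    have hmr : (volume (Metric.closedBall (0:E2) (R + phi l t))).toReal ^ (q-1)
        ≤ c₃ * t ^ a := by
      calc (volume (Metric.closedBall (0:E2) (R + phi l t))).toReal ^ (q-1)
          ≤ (c₁^2 * m₁ * t ^ (2*(l+1))) ^ (q-1) :=
            Real.rpow_le_rpow ENNReal.toReal_nonneg hmtb (by linarith)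
        _ = (c₁^2 * m₁) ^ (q-1) * (t ^ (2*(l+1))) ^ (q-1) :=
            Real.mul_rpow (by positivity) (Real.rpow_nonneg ht0.le _)
        _ = c₃ * t ^ a := by
            rw [hc₃_def, ← Real.rpow_mul ht0.le, ha_def]
    have h8 : (∫ x, u t x) ^ q ≤ X * (c₃ * t ^ a) := by
      refine le_trans hold ?_
      exact mul_le_mul_of_nonneg_left hmr hXnn
    have hta : 0 < t ^ a := Real.rpow_pos_of_pos ht0 _
    have h9 : A * t ^ (-a) * (∫ x, u t x) ^ q ≤ X := by
      have hinv : A * t ^ (-a) = (c₃ * t ^ a)⁻¹ := by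
        rw [hA_def, Real.rpow_neg ht0.le, mul_inv]
      rw [hinv]
      rw [inv_mul_le_iff₀ (by positivity)]
      calc (∫ x, u t x) ^ q ≤ X * (c₃ * t ^ a) := h8
        _ = c₃ * t ^ a * X := by ring
    linarith [hF2X, h9]
  -- apply the ODE blow-up lemma
  have hKpos : 0 < ε * I₁ := mul_pos hεpos hint
  have hmain := ode_blowup (T := T) hq ha hA hKpos le_rfl he hdF hdF1 hF1low hFlow
    (fun t ht ht1 => hF2low t ht (by linarith : (1:ℝ) ≤ t))
  -- convert to the required form
  have hexp_eq : -((q+1)/(q-1) - 2*(l+1))⁻¹ = -β := by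
    have h7 : (q+1)/(q-1) - 2*(l+1) = (q+1-a)/(q-1) := by
      rw [ha_def]; field_simp
    rw [h7, hβ_def, inv_div]
  rw [hexp_eq]
  have hεβ : (ε * I₁) ^ (-β) = ε ^ (-β) * I₁ ^ (-β) := Real.mul_rpow hεpos.le hint.le
  have h1ε : (1:ℝ) ≤ ε ^ (-β) := by
    calc (1:ℝ) = ε ^ (0:ℝ) := (Real.rpow_zero ε).symm
      _ ≤ ε ^ (-β) := Real.rpow_le_rpow_of_exponent_ge hεpos hε1 (by linarith)
  have hεβpos : 0 < ε ^ (-β) := Real.rpow_pos_of_pos hεpos _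
  refine le_trans hmain ?_
  rw [hC_def]
  apply max_le
  · nlinarith [mul_pos (mul_pos hD hI₁β) hεβpos]
  · rw [hεβ]
    nlinarith [mul_pos hD hI₁β, hεβpos, h1ε, mul_pos (mul_pos hD hI₁β) hεβpos]
end

section
/- Let ℓ > 0, let 0 < c₁ ≤ c₂ and T₀ ≥ 1, and let λ : (0,∞) → (0,∞) be continuous with c₁ t^{−ℓ/2} e^{−φ_ℓ(t)} ≤ λ(t) ≤ c₂ t^{−ℓ/2} e^{−φ_ℓ(t)} for all t ≥ T₀. Then there exists a constant C > 0 such that λ(t)² ∫_{t/2}^{t} λ(s)^{−2} ds ≥ C t^{−ℓ} for all t ≥ 2T₀. -/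
open Set MeasureTheory intervalIntegral

/-- MVT bound: `t^p - s^p ≤ p * t^(p-1) * (t - s)` for `0 ≤ s ≤ t`, `1 ≤ p`. -/
lemma rpow_sub_rpow_le_aux (p : ℝ) (hp : 1 ≤ p) {s t : ℝ} (hs : 0 ≤ s) (hst : s ≤ t) :
    t ^ p - s ^ p ≤ p * t ^ (p - 1) * (t - s) := by
  have ht : 0 ≤ t := hs.trans hst
  have hder : ∀ x ∈ Icc s t, HasDerivWithinAt (fun x : ℝ => x ^ p)
      (p * x ^ (p - 1)) (Icc s t) x := fun x _ =>
    (Real.hasDerivAt_rpow_const (Or.inr hp)).hasDerivWithinAt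
  have bound : ∀ x ∈ Ico s t, ‖p * x ^ (p - 1)‖ ≤ p * t ^ (p - 1) := by
    intro x hx
    have hx0 : 0 ≤ x := hs.trans hx.1
    rw [Real.norm_eq_abs, abs_of_nonneg (by positivity)]
    have := Real.rpow_le_rpow hx0 hx.2.le (by linarith : (0:ℝ) ≤ p - 1)
    nlinarith [Real.rpow_nonneg hx0 (p-1)]
  have := norm_image_sub_le_of_norm_deriv_le_segment' hder bound t ⟨hst, le_rfl⟩
  rw [Real.norm_eq_abs] at this
  calc t ^ p - s ^ p ≤ |t ^ p - s ^ p| := le_abs_self _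
    _ ≤ p * t ^ (p - 1) * (t - s) := this

set_option maxHeartbeats 1000000 in
/-- If `λ(t) ≍ t^{−ℓ/2} e^{−φ_ℓ(t)}` for `t ≥ T₀`, then
`λ(t)² ∫_{t/2}^t λ(s)^{−2} ds ≥ C t^{−ℓ}` for all `t ≥ 2T₀`. -/
theorem lower_bound_weighted_integral (l : ℝ) (hl : 0 < l)
    (c₁ c₂ T₀ : ℝ) (hc₁ : 0 < c₁) (hc₁₂ : c₁ ≤ c₂) (hT₀ : 1 ≤ T₀)
    (lam : ℝ → ℝ)
    (hcont : ContinuousOn lam (Ioi (0:ℝ)))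
    (hpos : ∀ t ∈ Ioi (0:ℝ), 0 < lam t)
    (hlow : ∀ t ≥ T₀, c₁ * t ^ (-(l/2)) * Real.exp (-(phi l t)) ≤ lam t)
    (hupp : ∀ t ≥ T₀, lam t ≤ c₂ * t ^ (-(l/2)) * Real.exp (-(phi l t))) :
    ∃ C > (0:ℝ), ∀ t ≥ 2*T₀,
      C * t ^ (-l) ≤ (lam t)^2 * ∫ s in (t/2)..t, ((lam s)^2)⁻¹ := by
  have hc₂ : 0 < c₂ := hc₁.trans_le hc₁₂
  refine ⟨c₁^2 / c₂^2 * 2 ^ (-l) * Real.exp (-2), by positivity, ?_⟩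
  intro t ht
  have ht2 : (2:ℝ) ≤ t := le_trans (by linarith) ht
  have htpos : (0:ℝ) < t := by linarith
  set ε : ℝ := t ^ (-l) with hεdef
  have hεpos : 0 < ε := Real.rpow_pos_of_pos htpos _
  have hε1 : ε ≤ 1 := Real.rpow_le_one_of_one_le_of_nonpos (by linarith) (by linarith)
  have htε : t / 2 ≤ t - ε := by linarith
  have hT₀t : T₀ ≤ t - ε := by linarith
  have hT₀half : T₀ ≤ t / 2 := by linarith
  have hhalfpos : (0:ℝ) < t / 2 := by linarith
  -- pointwise bounds
  have hlam_pos : ∀ s ∈ Icc (t/2) t, 0 < lam s := fun s hs =>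
    hpos s (by simp only [mem_Ioi]; linarith [hs.1])
  -- key: phi t - phi (t-ε) ≤ 1
  have hphi : phi l t - phi l (t - ε) ≤ 1 := by
    have h1 : t ^ (l+1) - (t-ε) ^ (l+1) ≤ (l+1) * t ^ l * ε := by
      have := rpow_sub_rpow_le_aux (l+1) (by linarith) (s := t - ε) (t := t)
        (by linarith) (by linarith)
      simpa [add_sub_cancel_right] using this
    have h2 : t ^ l * ε = 1 := by
      rw [hεdef, ← Real.rpow_add htpos]; simp
    have hl1 : (0:ℝ) < l + 1 := by linarith
    rw [phi, phi, div_sub_div_same, div_le_one hl1]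
    nlinarith
  -- lower bound for integrand on [t-ε, t]
  set m : ℝ := (c₂^2)⁻¹ * (t/2) ^ l * Real.exp (2 * phi l t - 2) with hmdef
  have hm : ∀ s ∈ Icc (t - ε) t, m ≤ ((lam s)^2)⁻¹ := by
    intro s hs
    have hs0 : 0 < s := by linarith [hs.1]
    have hsT : T₀ ≤ s := le_trans hT₀t hs.1
    have hls : 0 < lam s := hpos s (mem_Ioi.mpr hs0)
    have hub := hupp s hsT
    have hsq : (lam s)^2 ≤ c₂^2 * s ^ (-l) * Real.exp (-(2 * phi l s)) := by
      have h2 : (lam s)^2 ≤ (c₂ * s ^ (-(l/2)) * Real.exp (-(phi l s)))^2 :=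
        pow_le_pow_left₀ hls.le hub 2
      calc (lam s)^2 ≤ (c₂ * s ^ (-(l/2)) * Real.exp (-(phi l s)))^2 := h2
        _ = c₂^2 * (s ^ (-(l/2)))^2 * (Real.exp (-(phi l s)))^2 := by ring
        _ = c₂^2 * s ^ (-l) * Real.exp (-(2 * phi l s)) := by
            have e1 : (-(l/2)) * ((2:ℕ):ℝ) = -l := by push_cast; ring
            have e2 : ((2:ℕ):ℝ) * (-(phi l s)) = -(2 * phi l s) := by push_cast; ring
            rw [← Real.rpow_natCast (s ^ (-(l/2))) 2, ← Real.rpow_mul hs0.le, e1,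
              ← Real.exp_nat_mul, e2]
    have hrhs_pos : 0 < c₂^2 * s ^ (-l) * Real.exp (-(2 * phi l s)) := by positivity
    have hinv : (c₂^2 * s ^ (-l) * Real.exp (-(2 * phi l s)))⁻¹ ≤ ((lam s)^2)⁻¹ :=
      inv_anti₀ (by positivity) hsq
    refine le_trans ?_ hinv
    rw [mul_inv, mul_inv, ← Real.exp_neg, neg_neg, ← Real.rpow_neg hs0.le, neg_neg]
    have hsl : (t/2) ^ l ≤ s ^ l :=
      Real.rpow_le_rpow hhalfpos.le (le_trans htε hs.1) hl.le
    have hphis : phi l (t - ε) ≤ phi l s := by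
      rw [phi, phi]
      exact div_le_div_of_nonneg_right (Real.rpow_le_rpow (by linarith) hs.1 (by linarith)) (by linarith) |>.trans_eq rfl
    have hexp : Real.exp (2 * phi l t - 2) ≤ Real.exp (2 * phi l s) := by
      apply Real.exp_le_exp.mpr
      linarith
    rw [hmdef]
    have h1 : (0:ℝ) ≤ (c₂^2)⁻¹ := by positivity
    apply mul_le_mul (mul_le_mul le_rfl hsl (by positivity) h1) hexp (by positivity)
    positivity
  -- integrability
  have hcont2 : ContinuousOn (fun s => ((lam s)^2)⁻¹) (Icc (t/2) t) := by
    apply ContinuousOn.inv₀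
    · exact ((hcont.mono (fun x hx => mem_Ioi.mpr (by linarith [mem_Icc.mp hx |>.1]))).pow 2)
    · intro x hx
      exact pow_ne_zero 2 (hlam_pos x hx).ne'
  have huIcc : uIcc (t/2) t = Icc (t/2) t := uIcc_of_le (by linarith)
  have hintg : IntervalIntegrable (fun s => ((lam s)^2)⁻¹) volume (t/2) t :=
    (hcont2.mono huIcc.subset).intervalIntegrable
  -- integral lower bounds
  have hae : 0 ≤ᵐ[volume.restrict (Ioc (t/2) t)] (fun s => ((lam s)^2)⁻¹) := by
    filter_upwards [ae_restrict_mem measurableSet_Ioc] with x hx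
    have : 0 < lam x := hlam_pos x ⟨hx.1.le, hx.2⟩
    positivity
  have hstep1 : (∫ s in (t-ε)..t, ((lam s)^2)⁻¹) ≤ ∫ s in (t/2)..t, ((lam s)^2)⁻¹ :=
    integral_mono_interval htε (by linarith : t - ε ≤ t) le_rfl hae hintg
  have hstep2 : ε * m ≤ ∫ s in (t-ε)..t, ((lam s)^2)⁻¹ := by
    have hconst : (∫ _ in (t-ε)..t, m) = ε * m := by
      rw [intervalIntegral.integral_const, smul_eq_mul]; ring_nf
    have hsub : uIcc (t-ε) t ⊆ uIcc (t/2) t := by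
      rw [uIcc_of_le (by linarith : t - ε ≤ t), uIcc_of_le (by linarith : t/2 ≤ t)]
      exact Icc_subset_Icc htε le_rfl
    have hintg' : IntervalIntegrable (fun s => ((lam s)^2)⁻¹) volume (t-ε) t :=
      hintg.mono_set hsub
    have hmono : (∫ _ in (t-ε)..t, m) ≤ ∫ s in (t-ε)..t, ((lam s)^2)⁻¹ :=
      integral_mono_on (by linarith : t - ε ≤ t) intervalIntegrable_const hintg' hm
    linarith [hconst ▸ hmono]
  -- lower bound for lam t ^ 2
  have hlt : c₁^2 * t ^ (-l) * Real.exp (-(2 * phi l t)) ≤ (lam t)^2 := by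
    have hlb := hlow t (by linarith)
    have h2 : (c₁ * t ^ (-(l/2)) * Real.exp (-(phi l t)))^2 ≤ (lam t)^2 :=
      pow_le_pow_left₀ (by positivity) hlb 2
    refine le_trans (le_of_eq ?_) h2
    have e1 : (-(l/2)) * ((2:ℕ):ℝ) = -l := by push_cast; ring
    have e2 : ((2:ℕ):ℝ) * (-(phi l t)) = -(2 * phi l t) := by push_cast; ring
    rw [mul_pow, mul_pow, ← Real.rpow_natCast (t ^ (-(l/2))) 2, ← Real.rpow_mul htpos.le, e1,
      ← Real.exp_nat_mul, e2]
  -- combine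
  have hint_nonneg : 0 ≤ ∫ s in (t/2)..t, ((lam s)^2)⁻¹ := le_trans (by positivity) (hstep2.trans hstep1)
  have hfinal : c₁^2 * t ^ (-l) * Real.exp (-(2 * phi l t)) * (ε * m)
      ≤ (lam t)^2 * ∫ s in (t/2)..t, ((lam s)^2)⁻¹ := by
    apply mul_le_mul hlt (hstep2.trans hstep1) (by positivity) (sq_nonneg _)
  refine le_trans (le_of_eq ?_) hfinal
  -- algebra: C * t^(-l) = c₁² t^(-l) e^{-2φ} ε m
  rw [hmdef, hεdef]
  have e1 : (t/2) ^ l = t ^ l * 2 ^ (-l) := by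
    rw [Real.div_rpow htpos.le (by norm_num : (0:ℝ) ≤ 2),
      Real.rpow_neg (by norm_num : (0:ℝ) ≤ 2), div_eq_mul_inv]
  have e2 : t ^ (-l) * t ^ l = 1 := by
    rw [← Real.rpow_add htpos]; simp
  have e3 : Real.exp (-(2 * phi l t)) * Real.exp (2 * phi l t - 2) = Real.exp (-2) := by
    rw [← Real.exp_add]; ring_nf
  calc c₁^2 / c₂^2 * 2 ^ (-l) * Real.exp (-2) * t ^ (-l)
      = c₁^2 * (c₂^2)⁻¹ * 2 ^ (-l) * (Real.exp (-(2 * phi l t)) * Real.exp (2 * phi l t - 2)) * (t ^ (-l) * t ^ l) * t ^ (-l) := by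
        rw [e2, e3]; ring
    _ = c₁ ^ 2 * t ^ (-l) * Real.exp (-(2 * phi l t)) * (t ^ (-l) * ((c₂^2)⁻¹ * (t/2) ^ l * Real.exp (2 * phi l t - 2))) := by
        rw [e1]; ring
end

section
/- Let ℓ > 0, ω > 0, let 0 < c₁ ≤ c₂ and T₀ ≥ 1, and let λ : (0,∞) → (0,∞) be continuous with c₁ t^{−ℓ/2} e^{−φ_ℓ(t)} ≤ λ(t) ≤ c₂ t^{−ℓ/2} e^{−φ_ℓ(t)} for all t ≥ T₀. Then there exists a constant C > 0 such that λ(t)^{2ω} ∫_{t/2}^{t} s^{ℓ} λ(s)^{−2ω} ds ≥ C for all t ≥ 2T₀. -/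
open Set MeasureTheory intervalIntegral

lemma hasDerivAt_phi (l : ℝ) (hl : 0 < l) (s : ℝ) : HasDerivAt (phi l) (s ^ l) s := by
  have h := (Real.hasDerivAt_rpow_const (x := s) (p := l+1) (Or.inr (by linarith))).div_const (l+1)
  have e : (l + 1) * s ^ (l + 1 - 1) / (l + 1) = s ^ l := by
    rw [show l + 1 - 1 = l from by ring]
    field_simp
  exact e ▸ h

lemma contOn_aux (l ω a b : ℝ) (ha : 0 < a) :
    ContinuousOn (fun s => s ^ l * Real.exp (2*ω*phi l s)) (Icc a b) := by
  intro s hs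
  have hs0 : s ≠ 0 := ne_of_gt (lt_of_lt_of_le ha hs.1)
  have h1 : ContinuousAt (phi l) s :=
    (Real.continuousAt_rpow_const s (l+1) (Or.inl hs0)).div_const (l+1)
  exact ((Real.continuousAt_rpow_const s l (Or.inl hs0)).mul
    (Real.continuous_exp.continuousAt.comp (h1.const_mul (2*ω)))).continuousWithinAt

lemma ftc_eval (l ω : ℝ) (hl : 0 < l) (hω : 0 < ω) (a b : ℝ) (ha : 0 < a) (hab : a ≤ b) :
    ∫ s in a..b, s ^ l * Real.exp (2*ω*phi l s)
      = (Real.exp (2*ω*phi l b) - Real.exp (2*ω*phi l a)) / (2*ω) := by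
  have hderiv : ∀ s ∈ uIcc a b,
      HasDerivAt (fun s => Real.exp (2*ω*phi l s)/(2*ω)) (s ^ l * Real.exp (2*ω*phi l s)) s := by
    intro s _
    have h := (((hasDerivAt_phi l hl s).const_mul (2*ω)).exp).div_const (2*ω)
    refine h.congr_deriv ?_
    rw [div_eq_iff (mul_ne_zero two_ne_zero hω.ne')]
    ring
  rw [integral_eq_sub_of_hasDerivAt hderiv ((contOn_aux l ω a b ha).intervalIntegrable_of_Icc hab)]
  ring

/-- If `λ(t) ≍ t^{−ℓ/2} e^{−φ_ℓ(t)}` for `t ≥ T₀` and `ω > 0`, then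
`λ(t)^{2ω} ∫_{t/2}^t s^ℓ λ(s)^{−2ω} ds ≥ C` for all `t ≥ 2T₀`. -/
theorem lower_bound_weighted_integral_omega (l ω : ℝ) (hl : 0 < l) (hω : 0 < ω)
    (c₁ c₂ T₀ : ℝ) (hc₁ : 0 < c₁) (hc₁₂ : c₁ ≤ c₂) (hT₀ : 1 ≤ T₀)
    (lam : ℝ → ℝ)
    (hcont : ContinuousOn lam (Ioi (0:ℝ)))
    (hpos : ∀ t ∈ Ioi (0:ℝ), 0 < lam t)
    (hlow : ∀ t ≥ T₀, c₁ * t ^ (-(l/2)) * Real.exp (-(phi l t)) ≤ lam t)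
    (hupp : ∀ t ≥ T₀, lam t ≤ c₂ * t ^ (-(l/2)) * Real.exp (-(phi l t))) :
    ∃ C > (0:ℝ), ∀ t ≥ 2*T₀,
      C ≤ (lam t) ^ (2*ω) * ∫ s in (t/2)..t, s ^ l * ((lam s) ^ (2*ω))⁻¹ := by
  have hc₂ : 0 < c₂ := lt_of_lt_of_le hc₁ hc₁₂
  have hP1 : 1 < (2:ℝ)^(l+1) :=
    (Real.one_lt_rpow_iff_of_pos (by norm_num)).mpr (Or.inl ⟨by norm_num, by linarith⟩)
  set Δ₀ : ℝ := ((2:ℝ)^(l+1) - 1)/(l+1) with hΔ₀def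
  have hΔ₀ : 0 < Δ₀ := div_pos (by linarith) (by linarith)
  have hexplt : Real.exp (-(2*ω*Δ₀)) < 1 := by
    rw [Real.exp_lt_one_iff]; nlinarith
  set C : ℝ := c₁^(2*ω) * (c₂^(2*ω))⁻¹ * (((2:ℝ)^(ω*l))⁻¹ * ((1 - Real.exp (-(2*ω*Δ₀))) / (2*ω)))
    with hCdef
  have hCpos : 0 < C := by
    have h1 : (0:ℝ) < 1 - Real.exp (-(2*ω*Δ₀)) := by linarith
    positivity
  refine ⟨C, hCpos, ?_⟩
  intro t ht
  have ht2 : (2:ℝ) ≤ t := by linarith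
  have ht0 : (0:ℝ) < t := by linarith
  have hhalf : T₀ ≤ t/2 := by linarith
  have h1half : (1:ℝ) ≤ t/2 := by linarith
  have hhp : (0:ℝ) < t/2 := by linarith
  have hhalft : t/2 ≤ t := by linarith
  -- pointwise bound for the integrand
  have hK : ∀ s ∈ Icc (t/2) t,
      (c₂ ^ (2*ω))⁻¹ * (t/2) ^ (ω*l) * (s ^ l * Real.exp (2*ω*phi l s))
        ≤ s ^ l * ((lam s) ^ (2*ω))⁻¹ := by
    intro s hs
    have hs0 : (0:ℝ) < s := lt_of_lt_of_le hhp hs.1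
    have hlam : 0 < lam s := hpos s hs0
    have h2 : (lam s)^(2*ω) ≤ (c₂ * s ^ (-(l/2)) * Real.exp (-(phi l s)))^(2*ω) :=
      Real.rpow_le_rpow hlam.le (hupp s (le_trans hhalf hs.1)) (by positivity)
    have hexp : (c₂ * s ^ (-(l/2)) * Real.exp (-(phi l s)))^(2*ω)
        = c₂^(2*ω) * s^(-(l/2)*(2*ω)) * Real.exp (-(phi l s)*(2*ω)) := by
      rw [Real.mul_rpow (by positivity) (Real.exp_nonneg _),
          Real.mul_rpow (by positivity) (by positivity),
          ← Real.rpow_mul hs0.le, ← Real.exp_mul]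
    have hinv : ((c₂ * s ^ (-(l/2)) * Real.exp (-(phi l s)))^(2*ω))⁻¹
        = (c₂^(2*ω))⁻¹ * s^(ω*l) * Real.exp (2*ω*phi l s) := by
      rw [hexp, mul_inv, mul_inv, ← Real.rpow_neg hs0.le, ← Real.exp_neg,
        show -(-(l/2)*(2*ω)) = ω*l from by ring,
        show -(-(phi l s)*(2*ω)) = 2*ω*phi l s from by ring]
    have h3 : ((c₂ * s ^ (-(l/2)) * Real.exp (-(phi l s)))^(2*ω))⁻¹ ≤ ((lam s)^(2*ω))⁻¹ :=
      inv_anti₀ (Real.rpow_pos_of_pos hlam _) h2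
    calc (c₂ ^ (2*ω))⁻¹ * (t/2) ^ (ω*l) * (s ^ l * Real.exp (2*ω*phi l s))
        ≤ (c₂ ^ (2*ω))⁻¹ * s ^ (ω*l) * (s ^ l * Real.exp (2*ω*phi l s)) := by
          gcongr _ * ?_ * _
          exact Real.rpow_le_rpow hhp.le hs.1 (by positivity)
      _ = s ^ l * ((c₂ * s ^ (-(l/2)) * Real.exp (-(phi l s)))^(2*ω))⁻¹ := by
          rw [hinv]; ring
      _ ≤ s ^ l * ((lam s)^(2*ω))⁻¹ :=
          mul_le_mul_of_nonneg_left h3 (by positivity)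
  -- integrability
  have hsub : Icc (t/2) t ⊆ Ioi (0:ℝ) := fun s hs => lt_of_lt_of_le hhp hs.1
  have hint1 : IntervalIntegrable (fun s => s ^ l * ((lam s) ^ (2*ω))⁻¹) volume (t/2) t := by
    apply ContinuousOn.intervalIntegrable_of_Icc hhalft
    apply ContinuousOn.mul
    · intro s hs
      exact (Real.continuousAt_rpow_const s l (Or.inl (ne_of_gt (hsub hs)))).continuousWithinAt
    · exact (((hcont.mono hsub).rpow_const (fun s hs => Or.inr (by positivity))).inv₀
        (fun s hs => (Real.rpow_pos_of_pos (hpos s (hsub hs)) _).ne'))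
  have hint2 : IntervalIntegrable
      (fun s => (c₂ ^ (2*ω))⁻¹ * (t/2) ^ (ω*l) * (s ^ l * Real.exp (2*ω*phi l s)))
      volume (t/2) t :=
    ContinuousOn.intervalIntegrable_of_Icc hhalft
      (continuousOn_const.mul (contOn_aux l ω (t/2) t hhp))
  have hmono := intervalIntegral.integral_mono_on hhalft hint2 hint1 hK
  rw [intervalIntegral.integral_const_mul, ftc_eval l ω hl hω (t/2) t hhp hhalft] at hmono
  -- lower bound for lam t ^ (2ω)
  have hLt : (c₁ * t ^ (-(l/2)) * Real.exp (-(phi l t)))^(2*ω) ≤ (lam t)^(2*ω) :=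
    Real.rpow_le_rpow (by positivity) (hlow t (by linarith)) (by positivity)
  have hLexp : (c₁ * t ^ (-(l/2)) * Real.exp (-(phi l t)))^(2*ω)
      = c₁^(2*ω) * t^(-(l/2)*(2*ω)) * Real.exp (-(phi l t)*(2*ω)) := by
    rw [Real.mul_rpow (by positivity) (Real.exp_nonneg _),
        Real.mul_rpow (by positivity) (by positivity),
        ← Real.rpow_mul ht0.le, ← Real.exp_mul]
  -- phi difference bound
  have hphidiff : Δ₀ ≤ phi l t - phi l (t/2) := by
    have hTP : (2:ℝ)^(l+1) ≤ t^(l+1) := Real.rpow_le_rpow (by norm_num) ht2 (by linarith)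
    have ehalf : (t/2:ℝ)^(l+1) = t^(l+1)/(2:ℝ)^(l+1) := Real.div_rpow ht0.le (by norm_num) _
    have hP0 : (0:ℝ) < (2:ℝ)^(l+1) := by linarith
    show Δ₀ ≤ t^(l+1)/(l+1) - (t/2)^(l+1)/(l+1)
    rw [ehalf, hΔ₀def,
      show t^(l+1)/(l+1) - t^(l+1)/(2:ℝ)^(l+1)/(l+1)
        = (t^(l+1) - t^(l+1)/(2:ℝ)^(l+1))/(l+1) from by ring]
    gcongr ?_ / _
    have hfac : t^(l+1) - t^(l+1)/(2:ℝ)^(l+1) = t^(l+1)*((2:ℝ)^(l+1)-1)/(2:ℝ)^(l+1) := by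
      field_simp
    rw [hfac, le_div_iff₀ hP0]
    nlinarith [hTP, hP1]
  -- monotonicity of phi
  have hphimono : phi l (t/2) ≤ phi l t := by
    show (t/2)^(l+1)/(l+1) ≤ t^(l+1)/(l+1)
    gcongr ?_ / _
    exact Real.rpow_le_rpow hhp.le hhalft (by linarith)
  have hD0 : 0 ≤ (Real.exp (2*ω*phi l t) - Real.exp (2*ω*phi l (t/2)))/(2*ω) := by
    apply div_nonneg _ (by positivity)
    have := Real.exp_le_exp.mpr (by nlinarith : 2*ω*phi l (t/2) ≤ 2*ω*phi l t)
    linarith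
  have hmain : (c₁ * t ^ (-(l/2)) * Real.exp (-(phi l t)))^(2*ω) *
      ((c₂ ^ (2*ω))⁻¹ * (t/2) ^ (ω*l) *
        ((Real.exp (2*ω*phi l t) - Real.exp (2*ω*phi l (t/2)))/(2*ω)))
      ≤ (lam t)^(2*ω) * ∫ s in (t/2)..t, s ^ l * ((lam s) ^ (2*ω))⁻¹ :=
    mul_le_mul hLt hmono
      (mul_nonneg (mul_nonneg (by positivity) (by positivity)) hD0)
      (Real.rpow_nonneg (hpos t ht0).le _)
  have heq : (c₁ * t ^ (-(l/2)) * Real.exp (-(phi l t)))^(2*ω) *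
      ((c₂ ^ (2*ω))⁻¹ * (t/2) ^ (ω*l) *
        ((Real.exp (2*ω*phi l t) - Real.exp (2*ω*phi l (t/2)))/(2*ω)))
      = c₁^(2*ω) * (c₂^(2*ω))⁻¹ *
        (((2:ℝ)^(ω*l))⁻¹ * ((1 - Real.exp (-(2*ω*(phi l t - phi l (t/2)))))/(2*ω))) := by
    rw [hLexp]
    have e1 : (t/2:ℝ)^(ω*l) = t^(ω*l) * ((2:ℝ)^(ω*l))⁻¹ := by
      rw [Real.div_rpow ht0.le (by norm_num), div_eq_mul_inv]
    have e2 : t^(-(l/2)*(2*ω)) = (t^(ω*l))⁻¹ := by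
      rw [show -(l/2)*(2*ω) = -(ω*l) from by ring, Real.rpow_neg ht0.le]
    have e3 : Real.exp (-(phi l t)*(2*ω)) = (Real.exp (2*ω*phi l t))⁻¹ := by
      rw [← Real.exp_neg]; congr 1; ring
    have e4 : Real.exp (-(2*ω*(phi l t - phi l (t/2))))
        = Real.exp (2*ω*phi l (t/2)) * (Real.exp (2*ω*phi l t))⁻¹ := by
      rw [← Real.exp_neg, ← Real.exp_add]; congr 1; ring
    rw [e1, e2, e3, e4]
    have hX : (t:ℝ)^(ω*l) ≠ 0 := by positivity
    have hE : Real.exp (2*ω*phi l t) ≠ 0 := Real.exp_ne_zero _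
    field_simp
  calc C ≤ c₁^(2*ω) * (c₂^(2*ω))⁻¹ *
        (((2:ℝ)^(ω*l))⁻¹ * ((1 - Real.exp (-(2*ω*(phi l t - phi l (t/2)))))/(2*ω))) := by
        rw [hCdef]
        gcongr
    _ = _ := heq.symm
    _ ≤ _ := hmain
end

section
/- Let q > 1, C > 0, a ≥ 0, T₀ ≥ 0, T > 2T₀, α ≥ 0, β ≥ 0, M > 0, and let U : [0,T) → ℝ be continuous and nonnegative. Suppose that U(t) ≥ C ∫_{2T₀}^{t} ∫_{2T₀}^{s} (1+τ)^{−a} U(τ)^{q} dτ ds for all t ∈ (2T₀, T) and that U(t) ≥ M (1+t)^{−α} (t − 2T₀)^{β} for all t ∈ (2T₀, T). Then U(t) ≥ (C M^{q} / ((βq+1)(βq+2))) (1+t)^{−(a + αq)} (t − 2T₀)^{βq + 2} for all t ∈ (2T₀, T). -/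
open Set MeasureTheory intervalIntegral

/-- Inductive step of the iteration argument: plugging the lower bound
`U(t) ≥ M (1+t)^{−α} (t − 2T₀)^β` into the iteration frame
`U(t) ≥ C ∫_{2T₀}^t ∫_{2T₀}^s (1+τ)^{−a} U(τ)^q dτ ds` yields
`U(t) ≥ (C M^q/((βq+1)(βq+2))) (1+t)^{−(a+αq)} (t − 2T₀)^{βq+2}`. -/
theorem iteration_inductive_step
    (q C a T₀ T α β M : ℝ) (hq : 1 < q) (hC : 0 < C) (ha : 0 ≤ a)
    (hT₀ : 0 ≤ T₀) (hT : 2*T₀ < T) (hα : 0 ≤ α) (hβ : 0 ≤ β) (hM : 0 < M)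
    (U : ℝ → ℝ)
    (hUc : ContinuousOn U (Ico (0:ℝ) T))
    (hUnn : ∀ t ∈ Ico (0:ℝ) T, 0 ≤ U t)
    (hframe : ∀ t ∈ Ioo (2*T₀) T,
      C * ∫ s in (2*T₀)..t, (∫ τ in (2*T₀)..s, (1 + τ) ^ (-a) * (U τ) ^ q) ≤ U t)
    (hlow : ∀ t ∈ Ioo (2*T₀) T, M * (1 + t) ^ (-α) * (t - 2*T₀) ^ β ≤ U t) :
    ∀ t ∈ Ioo (2*T₀) T,
      (C * M ^ q / ((β*q + 1) * (β*q + 2))) * (1 + t) ^ (-(a + α*q))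
        * (t - 2*T₀) ^ (β*q + 2) ≤ U t := by
  intro t ht
  obtain ⟨htc, htT⟩ := ht
  set c : ℝ := 2*T₀ with hc
  have hc0 : 0 ≤ c := by positivity
  have hq0 : (0:ℝ) ≤ q := by linarith
  set p : ℝ := β*q with hpdef
  have hp0 : 0 ≤ p := by positivity
  have hp1 : (0:ℝ) < p + 1 := by linarith
  have hp2 : (0:ℝ) < p + 2 := by linarith
  set K : ℝ := M^q * (1+t) ^ (-(a+α*q)) with hKdef
  have h1t : (0:ℝ) < 1 + t := by linarith
  have hK0 : 0 < K := by
    apply mul_pos (Real.rpow_pos_of_pos hM q) (Real.rpow_pos_of_pos h1t _)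
  set h : ℝ → ℝ := fun τ => (1 + τ) ^ (-a) * (U τ) ^ q with hh
  -- continuity of the inner integrand on [c, t]
  have hsub : Icc c t ⊆ Ico (0:ℝ) T := fun x hx => ⟨le_trans hc0 hx.1, lt_of_le_of_lt hx.2 htT⟩
  have hcont : ContinuousOn h (Icc c t) := by
    apply ContinuousOn.mul
    · apply ContinuousOn.rpow_const (by fun_prop)
      intro x hx
      left
      have : 0 ≤ x := le_trans hc0 hx.1
      positivity
    · apply ContinuousOn.rpow_const (hUc.mono hsub)
      intro x hx
      exact Or.inr hq0
  have hint : ∀ s ∈ Icc c t, IntervalIntegrable h volume c s := by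
    intro s hs
    apply ContinuousOn.intervalIntegrable
    apply hcont.mono
    rw [uIcc_of_le hs.1]
    exact Icc_subset_Icc le_rfl hs.2
  -- the comparison lower integrand
  set f : ℝ → ℝ := fun τ => K * (τ - c) ^ p with hf
  have hfint : ∀ s₁ s₂ : ℝ, IntervalIntegrable f volume s₁ s₂ := by
    intro s₁ s₂
    apply IntervalIntegrable.const_mul
    have := (intervalIntegrable_rpow (a := s₁ - c) (b := s₂ - c) (r := p)
      (Or.inl hp0)).comp_sub_right c
    simpa using this
  -- value of ∫ f over c..s
  have hfval : ∀ s : ℝ, (∫ τ in c..s, f τ) = K * (s - c) ^ (p+1) / (p+1) := by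
    intro s
    rw [intervalIntegral.integral_const_mul]
    rw [show (∫ τ in c..s, (τ - c) ^ p) = ∫ x in (c - c)..(s - c), x ^ p from
      intervalIntegral.integral_comp_sub_right (fun x => x ^ p) c]
    rw [sub_self, integral_rpow (Or.inl (by linarith))]
    rw [Real.zero_rpow (by positivity)]
    ring
  -- pointwise comparison on (c, t]
  have hptwise : ∀ τ ∈ Ioc c t, f τ ≤ h τ := by
    intro τ hτ
    have hτT : τ ∈ Ioo c T := ⟨hτ.1, lt_of_le_of_lt hτ.2 htT⟩
    have h1τ : (0:ℝ) < 1 + τ := by have := hτ.1; nlinarith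
    have hτc : (0:ℝ) ≤ τ - c := by linarith [hτ.1.le]
    have hUτ := hlow τ hτT
    have hL0 : 0 ≤ M * (1 + τ) ^ (-α) * (τ - c) ^ β := by positivity
    have hUq : (M * (1 + τ) ^ (-α) * (τ - c) ^ β) ^ q ≤ (U τ) ^ q :=
      Real.rpow_le_rpow hL0 hUτ hq0
    have hexp : (M * (1 + τ) ^ (-α) * (τ - c) ^ β) ^ q
        = M ^ q * (1 + τ) ^ (-(α*q)) * (τ - c) ^ p := by
      rw [Real.mul_rpow (by positivity) (by positivity),
        Real.mul_rpow (by positivity) (by positivity),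
        ← Real.rpow_mul h1τ.le, ← Real.rpow_mul hτc]
      rw [hpdef]; ring_nf
    have hbase : (1 + t) ^ (-(a + α*q)) ≤ (1 + τ) ^ (-(a + α*q)) := by
      apply Real.rpow_le_rpow_of_nonpos h1τ (by linarith [hτ.2]) (by linarith [mul_nonneg hα hq0])
    calc f τ = M^q * (1+t) ^ (-(a+α*q)) * (τ - c) ^ p := rfl
      _ ≤ M^q * (1+τ) ^ (-(a+α*q)) * (τ - c) ^ p := by
          apply mul_le_mul_of_nonneg_right _ (by positivity)
          exact mul_le_mul_of_nonneg_left hbase (by positivity)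
      _ = (1 + τ) ^ (-a) * (M ^ q * (1 + τ) ^ (-(α*q)) * (τ - c) ^ p) := by
          rw [show -(a + α*q) = -a + -(α*q) by ring, Real.rpow_add h1τ]
          ring
      _ ≤ (1 + τ) ^ (-a) * (U τ) ^ q := by
          apply mul_le_mul_of_nonneg_left _ (by positivity)
          rw [← hexp]; exact hUq
  -- a.e. comparison on restriction to Icc c s, for s ∈ Icc c t
  have hae : ∀ s ∈ Icc c t, f ≤ᵐ[volume.restrict (Icc c s)] h := by
    intro s hs
    have hne : ∀ᵐ τ ∂(volume.restrict (Icc c s)), τ ≠ c := by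
      rw [Filter.eventually_iff, mem_ae_iff]
      have : {τ : ℝ | τ ≠ c}ᶜ = {c} := by ext x; simp
      rw [this]
      exact le_antisymm (le_trans (Measure.restrict_apply_le _ _) (by simp)) (zero_le)
    filter_upwards [hne, ae_restrict_mem measurableSet_Icc] with τ hτne hτmem
    exact hptwise τ ⟨lt_of_le_of_ne hτmem.1 (Ne.symm hτne), le_trans hτmem.2 hs.2⟩
  -- inner integral bound
  have hinner : ∀ s ∈ Icc c t, K * (s - c) ^ (p+1) / (p+1) ≤ ∫ τ in c..s, h τ := by
    intro s hs
    rw [← hfval s]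
    exact intervalIntegral.integral_mono_ae_restrict hs.1 (hfint c s) (hint s hs) (hae s hs)
  -- outer integrand functions
  set F : ℝ → ℝ := fun s => ∫ τ in c..s, h τ with hF
  have hFint : IntervalIntegrable F volume c t := by
    apply ContinuousOn.intervalIntegrable
    have hInt : IntegrableOn h (uIcc c t) volume := by
      rw [uIcc_of_le htc.le]; exact hcont.integrableOn_Icc
    exact continuousOn_primitive_interval (a := c) (b := t) (f := h) (μ := volume) hInt
  set G : ℝ → ℝ := fun s => K * (s - c) ^ (p+1) / (p+1) with hG
  have hGint : IntervalIntegrable G volume c t := by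
    have : IntervalIntegrable (fun s => (K/(p+1)) * (s - c) ^ (p+1)) volume c t := by
      apply IntervalIntegrable.const_mul
      have := (intervalIntegrable_rpow (a := c - c) (b := t - c) (r := p+1)
        (Or.inl hp1.le)).comp_sub_right c
      simpa using this
    apply this.congr
    intro s _
    simp only [hG]; ring
  have hGae : G ≤ᵐ[volume.restrict (Icc c t)] F := by
    filter_upwards [ae_restrict_mem measurableSet_Icc] with s hs
    exact hinner s hs
  have hGval : (∫ s in c..t, G s) = K / ((p+1)*(p+2)) * (t - c) ^ (p+2) := by
    have : (∫ s in c..t, G s) = ∫ s in c..t, (K/(p+1)) * (s - c) ^ (p+1) := by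
      apply intervalIntegral.integral_congr
      intro s _
      simp only [hG]; ring
    rw [this, intervalIntegral.integral_const_mul]
    rw [show (∫ s in c..t, (s - c) ^ (p+1)) = ∫ x in (c - c)..(t - c), x ^ (p+1) from
      intervalIntegral.integral_comp_sub_right (fun x => x ^ (p+1)) c]
    rw [sub_self, integral_rpow (Or.inl (by linarith))]
    rw [Real.zero_rpow (by positivity)]
    have hpp : p + 1 + 1 = p + 2 := by ring
    rw [hpp]
    have hp1' : p + 1 ≠ 0 := hp1.ne'
    have hp2' : p + 2 ≠ 0 := hp2.ne'
    field_simp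
    rw [sub_zero]
  have houter : (∫ s in c..t, G s) ≤ ∫ s in c..t, F s :=
    intervalIntegral.integral_mono_ae_restrict htc.le hGint hFint hGae
  have hfinal := hframe t ⟨htc, htT⟩
  have hCmono : C * ∫ s in c..t, G s ≤ C * ∫ s in c..t, F s :=
    mul_le_mul_of_nonneg_left houter hC.le
  have hgoal : C * M ^ q / ((p + 1) * (p + 2)) * (1 + t) ^ (-(a + α * q))
      * (t - c) ^ (p + 2) = C * ∫ s in c..t, G s := by
    rw [hGval, hKdef]
    ring
  rw [hgoal]
  exact hCmono.trans hfinal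
end

section
/- Let n ≥ 1 be an integer, ℓ > 0, and p, q > 1 with θ(n,ℓ,p,q) > 0, where θ(n,ℓ,p,q) = 2 − (1/2)[((ℓ+1)n−1)p − 2ℓ(p−1) − 2](q−1). Set a = (ℓ+1)n(q−1), α₀ = (ℓ+1)(n−1)p/2 and β₀ = ℓp/2 + (ℓ+1)(n−1) + 2. Let T₀ > 0, C > 0 and K > 0. Then there exist constants ε₀ > 0 and C' > 0, independent of ε, with the following property: for every ε ∈ (0, ε₀] and every T > 2T₀, if U : [0,T) → [0,∞) is continuous and satisfies both U(t) ≥ C ∫_{2T₀}^{t} ∫_{2T₀}^{s} (1+τ)^{−a} U(τ)^{q} dτ ds and U(t) ≥ K ε^{p} (1+t)^{−α₀} (t − 2T₀)^{β₀} for all t ∈ (2T₀, T), then T ≤ C' ε^{−p(q−1)/θ(n,ℓ,p,q)}. -/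
open Set MeasureTheory intervalIntegral

private noncomputable def Dseq (C q : ℝ) (β : ℕ → ℝ) (D0 : ℝ) : ℕ → ℝ
  | 0 => D0
  | (j+1) => C * (Dseq C q β D0 j) ^ q / ((q * β j + 1) * (q * β j + 2))

private lemma integral_sub_rpow {A s b : ℝ} (hb : 0 < b) :
    ∫ τ in A..s, (τ - A) ^ b = (s - A) ^ (b+1) / (b+1) := by
  have h := intervalIntegral.integral_comp_sub_right (a := A) (b := s) (fun x => x ^ b) A
  rw [h, sub_self, integral_rpow (Or.inl (by linarith)), Real.zero_rpow (by linarith)]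
  ring

set_option maxHeartbeats 1000000 in
/-- Analytic core of the blow-up proof: any nonnegative continuous function
satisfying the iteration frame coming from the power nonlinearity together
with the first lower bound coming from the derivative-type nonlinearity
cannot exist beyond time of order `ε^{−p(q−1)/θ(n,ℓ,p,q)}`. -/
theorem iteration_blowup_core
    (n : ℕ) (hn : 1 ≤ n) (l p q : ℝ) (hl : 0 < l) (hp : 1 < p) (hq : 1 < q)
    (θ a α₀ β₀ : ℝ)
    (hθdef : θ = 2 - (1/2) * ((((l+1)*(n:ℝ) - 1)*p - 2*l*(p-1) - 2) * (q-1)))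
    (hθpos : 0 < θ)
    (hadef : a = (l+1)*(n:ℝ)*(q-1))
    (hα₀def : α₀ = (l+1)*((n:ℝ)-1)*p/2)
    (hβ₀def : β₀ = l*p/2 + (l+1)*((n:ℝ)-1) + 2)
    (T₀ C K : ℝ) (hT₀ : 0 < T₀) (hC : 0 < C) (hK : 0 < K) :
    ∃ ε₀ > (0:ℝ), ∃ C' > (0:ℝ), ∀ ε ∈ Ioc (0:ℝ) ε₀, ∀ T > 2*T₀, ∀ U : ℝ → ℝ,
      ContinuousOn U (Ico (0:ℝ) T) →
      (∀ t ∈ Ico (0:ℝ) T, 0 ≤ U t) →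
      (∀ t ∈ Ioo (2*T₀) T,
        C * ∫ s in (2*T₀)..t, (∫ τ in (2*T₀)..s, (1 + τ) ^ (-a) * (U τ) ^ q) ≤ U t) →
      (∀ t ∈ Ioo (2*T₀) T,
        K * ε ^ p * (1 + t) ^ (-α₀) * (t - 2*T₀) ^ β₀ ≤ U t) →
      T ≤ C' * ε ^ (-(p*(q-1)/θ)) := by
  have hq1 : (0:ℝ) < q - 1 := by linarith
  have hq1' : q - 1 ≠ 0 := ne_of_gt hq1
  have hqpos : (0:ℝ) < q := by linarith
  have hn1 : (1:ℝ) ≤ (n:ℝ) := by exact_mod_cast hn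
  have hl1 : (0:ℝ) < l + 1 := by linarith
  have hnpos : (0:ℝ) < (n:ℝ) := by linarith
  have hapos : 0 < a := by rw [hadef]; exact mul_pos (mul_pos hl1 hnpos) hq1
  have hα₀nn : 0 ≤ α₀ := by
    rw [hα₀def]
    apply div_nonneg _ (by norm_num)
    exact mul_nonneg (mul_nonneg hl1.le (by linarith)) (by linarith)
  have hβ₀gt : 2 < β₀ := by
    rw [hβ₀def]
    have h1 := mul_nonneg hl1.le (sub_nonneg.mpr hn1)
    have h2 : 0 < l * p := mul_pos hl (by linarith)
    linarith only [h1, h2]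
  -- constants
  obtain ⟨θ', hθ'def⟩ : ∃ x : ℝ, x = θ / (q-1) := ⟨_, rfl⟩
  have hθ'pos : 0 < θ' := hθ'def ▸ div_pos hθpos hq1
  obtain ⟨Aa, hAadef⟩ : ∃ x : ℝ, x = α₀ + a/(q-1) := ⟨_, rfl⟩
  obtain ⟨Bb, hBbdef⟩ : ∃ x : ℝ, x = β₀ + 2/(q-1) := ⟨_, rfl⟩
  have hann : 0 ≤ a/(q-1) := (div_pos hapos hq1).le
  have h2nn : (0:ℝ) ≤ 2/(q-1) := div_nonneg (by norm_num) hq1.le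
  have hAann : 0 ≤ Aa := by rw [hAadef]; exact add_nonneg hα₀nn hann
  have hBbpos : 0 < Bb := by rw [hBbdef]; linarith
  have hBA : Bb - Aa = θ' := by
    rw [hAadef, hBbdef, hθ'def, hθdef, hα₀def, hβ₀def, hadef]
    field_simp
    ring
  obtain ⟨ν, hνdef⟩ : ∃ x : ℝ, x = 2/(q-1) - a/(q-1) := ⟨_, rfl⟩
  obtain ⟨G, hGdef⟩ : ∃ x : ℝ, x = Aa + Bb := ⟨_, rfl⟩
  -- sequences
  obtain ⟨αs, hαsdef⟩ : ∃ f : ℕ → ℝ, f = fun j => q^j * Aa - a/(q-1) := ⟨_, rfl⟩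
  obtain ⟨βs, hβsdef⟩ : ∃ f : ℕ → ℝ, f = fun j => q^j * Bb - 2/(q-1) := ⟨_, rfl⟩
  have hqj1 : ∀ j : ℕ, 1 ≤ q^j := fun j => one_le_pow₀ hq.le
  have hqjpos : ∀ j : ℕ, 0 < q^j := fun j => lt_of_lt_of_le one_pos (hqj1 j)
  have hαnn : ∀ j, 0 ≤ αs j := by
    intro j
    have h1 : (0:ℝ) ≤ (q^j - 1) * Aa := mul_nonneg (by linarith [hqj1 j]) hAann
    simp only [hαsdef]
    linarith only [h1, hα₀nn, hAadef, hann]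
  have hβge : ∀ j, β₀ ≤ βs j := by
    intro j
    have h1 : (0:ℝ) ≤ (q^j - 1) * Bb := mul_nonneg (by linarith [hqj1 j]) hBbpos.le
    simp only [hβsdef]
    linarith only [h1, hBbdef]
  have hβpos : ∀ j, 2 < βs j := fun j => lt_of_lt_of_le hβ₀gt (hβge j)
  have hαrec : ∀ j, αs (j+1) = q * αs j + a := by
    intro j; simp only [hαsdef, pow_succ]; field_simp; ring
  have hβrec : ∀ j, βs (j+1) = q * βs j + 2 := by
    intro j; simp only [hβsdef, pow_succ]; field_simp; ring
  have hα0 : αs 0 = α₀ := by simp only [hαsdef, pow_zero, hAadef]; ring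
  have hβ0 : βs 0 = β₀ := by simp only [hβsdef, pow_zero, hBbdef]; ring
  -- more constants
  obtain ⟨c₁, hc₁def⟩ : ∃ x : ℝ, x = C / (Bb + 2)^2 := ⟨_, rfl⟩
  have hc₁pos : 0 < c₁ := hc₁def ▸ div_pos hC (pow_pos (by linarith) 2)
  have hlq : 0 < Real.log q := Real.log_pos hq
  obtain ⟨W, hWdef⟩ : ∃ x : ℝ, x = 2 * Real.log q / (q-1) := ⟨_, rfl⟩
  have hWnn : 0 ≤ W := hWdef ▸ div_nonneg (by linarith) hq1.le
  have hWeq : (q-1) * W = 2 * Real.log q := by rw [hWdef]; field_simp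
  obtain ⟨V, hVdef⟩ : ∃ x : ℝ, x = (W + 2*Real.log q - Real.log c₁) / (q-1) := ⟨_, rfl⟩
  have hVeq : (q-1) * V = W + 2*Real.log q - Real.log c₁ := by rw [hVdef]; field_simp
  obtain ⟨S, hSdef⟩ : ∃ x : ℝ, x = max V 0 := ⟨_, rfl⟩
  have hSV : V ≤ S := hSdef ▸ le_max_left _ _
  obtain ⟨t₁, ht₁def⟩ : ∃ x : ℝ, x = max 1 (4*T₀) := ⟨_, rfl⟩
  have ht₁1 : (1:ℝ) ≤ t₁ := ht₁def ▸ le_max_left _ _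
  have ht₁4 : 4*T₀ ≤ t₁ := ht₁def ▸ le_max_right _ _
  obtain ⟨C₂, hC₂def⟩ : ∃ x : ℝ, x = Real.exp ((S + G * Real.log 2 - Real.log K)/θ') := ⟨_, rfl⟩
  have hC₂pos : 0 < C₂ := hC₂def ▸ Real.exp_pos _
  refine ⟨1, one_pos, max (t₁+1) (2*C₂),
    lt_of_lt_of_le (by linarith : (0:ℝ) < t₁+1) (le_max_left _ _), ?_⟩
  intro ε hε T hT U hUc hUnn hIter hLow
  obtain ⟨hεpos, hε1⟩ := hε
  obtain ⟨κ, hκdef⟩ : ∃ x : ℝ, x = -(p*(q-1)/θ) := ⟨_, rfl⟩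
  rw [← hκdef]
  have hκneg : κ ≤ 0 := by
    rw [hκdef]
    exact neg_nonpos.mpr (div_nonneg (mul_nonneg (by linarith) hq1.le) hθpos.le)
  have hεκ1 : 1 ≤ ε ^ κ := Real.one_le_rpow_of_pos_of_le_one_of_nonpos hεpos hε1 hκneg
  have hεκpos : 0 < ε ^ κ := Real.rpow_pos_of_pos hεpos _
  obtain ⟨D0, hD0def⟩ : ∃ x : ℝ, x = K * ε ^ p := ⟨_, rfl⟩
  have hD0pos : 0 < D0 := hD0def ▸ mul_pos hK (Real.rpow_pos_of_pos hεpos p)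
  obtain ⟨D, hDdef⟩ : ∃ f : ℕ → ℝ, f = Dseq C q βs D0 := ⟨_, rfl⟩
  have hDrec : ∀ j, D (j+1) = C * (D j) ^ q / ((q * βs j + 1) * (q * βs j + 2)) := by
    intro j; rw [hDdef]; rfl
  have hD0' : D 0 = D0 := by rw [hDdef]; rfl
  have hDpos : ∀ j, 0 < D j := by
    intro j
    induction j with
    | zero => rw [hD0']; exact hD0pos
    | succ j ih =>
      rw [hDrec j]
      have h0 := mul_lt_mul_of_pos_left (hβpos j) hqpos
      have h1 : 0 < q * βs j + 1 := by linarith only [h0, hq]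
      have h2 : 0 < q * βs j + 2 := by linarith only [h0, hq]
      exact div_pos (mul_pos hC (Real.rpow_pos_of_pos ih q)) (mul_pos h1 h2)
  have h2T₀pos : 0 < 2*T₀ := by linarith
  -- the key induction
  have key : ∀ j, ∀ t ∈ Ioo (2*T₀) T,
      D j * (1+t) ^ (-(αs j)) * (t - 2*T₀) ^ (βs j) ≤ U t := by
    intro j
    induction j with
    | zero =>
      intro t ht
      rw [hD0', hα0, hβ0, hD0def]
      exact hLow t ht
    | succ j ih =>
      intro t ht
      obtain ⟨ht1, ht2⟩ := ht
      obtain ⟨b, hbdef⟩ : ∃ x : ℝ, x = q * βs j := ⟨_, rfl⟩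
      have hbpos : 0 < b := by
        rw [hbdef]
        have h0 := mul_lt_mul_of_pos_left (hβpos j) hqpos
        linarith only [h0, hq]
      obtain ⟨e, hedef⟩ : ∃ x : ℝ, x = a + q * αs j := ⟨_, rfl⟩
      have hepos : 0 < e := by
        rw [hedef]
        have h0 := mul_nonneg hqpos.le (hαnn j)
        linarith only [h0, hapos]
      have h1t : (0:ℝ) < 1 + t := by linarith
      have hDjpos : 0 < D j := hDpos j
      obtain ⟨cst, hcstdef⟩ : ∃ x : ℝ, x = (D j) ^ q * (1+t) ^ (-e) := ⟨_, rfl⟩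
      have hcstnn : 0 ≤ cst := by
        rw [hcstdef]
        exact mul_nonneg (Real.rpow_nonneg hDjpos.le q) (Real.rpow_nonneg h1t.le _)
      have hsub : Icc (2*T₀) t ⊆ Ico 0 T :=
        fun x hx => ⟨by linarith [hx.1], lt_of_le_of_lt hx.2 ht2⟩
      have hfc : ContinuousOn (fun τ => (1+τ) ^ (-a) * U τ ^ q) (Icc (2*T₀) t) := by
        apply ContinuousOn.mul
        · apply ContinuousOn.rpow_const ((continuous_const.add continuous_id).continuousOn)
          intro x hx
          exact Or.inl (ne_of_gt (by linarith [hx.1] : (0:ℝ) < 1 + x))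
        · exact (hUc.mono hsub).rpow_const (fun x _ => Or.inr hqpos.le)
      -- pointwise inner bound
      have hpt : ∀ τ ∈ Icc (2*T₀) t, cst * (τ - 2*T₀) ^ b ≤ (1+τ) ^ (-a) * U τ ^ q := by
        intro τ hτ
        obtain ⟨hτ1, hτ2⟩ := hτ
        have h1τ : (0:ℝ) < 1 + τ := by linarith
        rcases eq_or_lt_of_le hτ1 with hE | hE
        · rw [← hE, sub_self, Real.zero_rpow hbpos.ne', mul_zero]
          have hUτ : 0 ≤ U (2*T₀) := hUnn _ ⟨by linarith, by linarith⟩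
          exact mul_nonneg (Real.rpow_nonneg (by linarith) _) (Real.rpow_nonneg hUτ _)
        · have hτIoo : τ ∈ Ioo (2*T₀) T := ⟨hE, lt_of_le_of_lt hτ2 ht2⟩
          have hU := ih τ hτIoo
          have hτ2T : (0:ℝ) ≤ τ - 2*T₀ := by linarith
          have hbase : 0 ≤ D j * (1+τ) ^ (-(αs j)) * (τ - 2*T₀) ^ (βs j) :=
            mul_nonneg (mul_nonneg hDjpos.le (Real.rpow_nonneg h1τ.le _))
              (Real.rpow_nonneg hτ2T _)
          have hqle : (D j * (1+τ) ^ (-(αs j)) * (τ - 2*T₀) ^ (βs j)) ^ q ≤ U τ ^ q :=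
            Real.rpow_le_rpow hbase hU hqpos.le
          have hexp : (D j * (1+τ) ^ (-(αs j)) * (τ - 2*T₀) ^ (βs j)) ^ q
              = (D j) ^ q * (1+τ) ^ (-(q * αs j)) * (τ - 2*T₀) ^ b := by
            rw [Real.mul_rpow (mul_nonneg hDjpos.le (Real.rpow_nonneg h1τ.le _))
                  (Real.rpow_nonneg hτ2T _),
                Real.mul_rpow hDjpos.le (Real.rpow_nonneg h1τ.le _),
                ← Real.rpow_mul h1τ.le, ← Real.rpow_mul hτ2T,
                show -(αs j) * q = -(q * αs j) by ring]
            rw [show βs j * q = b by rw [hbdef]; ring]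
          calc cst * (τ - 2*T₀) ^ b
              ≤ (D j) ^ q * (1+τ) ^ (-e) * (τ - 2*T₀) ^ b := by
                have h := Real.rpow_le_rpow_of_nonpos h1τ (by linarith : 1+τ ≤ 1+t)
                  (by linarith : -e ≤ 0)
                rw [hcstdef]
                exact mul_le_mul_of_nonneg_right
                  (mul_le_mul_of_nonneg_left h (Real.rpow_nonneg hDjpos.le q))
                  (Real.rpow_nonneg hτ2T b)
            _ = (1+τ) ^ (-a) * ((D j) ^ q * (1+τ) ^ (-(q * αs j)) * (τ - 2*T₀) ^ b) := by
                rw [show (-e : ℝ) = -a + -(q * αs j) by rw [hedef]; ring,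
                    Real.rpow_add h1τ]
                ring
            _ ≤ (1+τ) ^ (-a) * U τ ^ q := by
                apply mul_le_mul_of_nonneg_left _ (Real.rpow_nonneg h1τ.le _)
                rw [← hexp]; exact hqle
      -- continuity of lower integrand
      have hgc : ContinuousOn (fun τ => cst * (τ - 2*T₀) ^ b) (Icc (2*T₀) t) := by
        apply continuousOn_const.mul
        exact (continuousOn_id.sub continuousOn_const).rpow_const
          (fun x _ => Or.inr hbpos.le)
      -- inner integral bound
      have hinner : ∀ s ∈ Icc (2*T₀) t,
          cst / (b+1) * (s - 2*T₀) ^ (b+1) ≤ ∫ τ in (2*T₀)..s, (1+τ) ^ (-a) * U τ ^ q := by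
        intro s hs
        have hmono : Icc (2*T₀) s ⊆ Icc (2*T₀) t := Icc_subset_Icc_right hs.2
        have hfint : IntervalIntegrable (fun τ => (1+τ) ^ (-a) * U τ ^ q) volume (2*T₀) s :=
          (hfc.mono hmono).intervalIntegrable_of_Icc hs.1
        have hgint : IntervalIntegrable (fun τ => cst * (τ - 2*T₀) ^ b) volume (2*T₀) s :=
          (hgc.mono hmono).intervalIntegrable_of_Icc hs.1
        have h := intervalIntegral.integral_mono_on hs.1 hgint hfint
          (fun x hx => hpt x (hmono hx))
        rw [intervalIntegral.integral_const_mul, integral_sub_rpow hbpos] at h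
        calc cst / (b+1) * (s - 2*T₀) ^ (b+1)
            = cst * ((s - 2*T₀) ^ (b+1) / (b+1)) := by ring
          _ ≤ _ := h
      -- outer integral
      have huIcc : uIcc (2*T₀) t = Icc (2*T₀) t := uIcc_of_le ht1.le
      have hFcont : ContinuousOn (fun s => ∫ τ in (2*T₀)..s, (1+τ) ^ (-a) * U τ ^ q)
          (Icc (2*T₀) t) := by
        have hint : IntegrableOn (fun τ => (1+τ) ^ (-a) * U τ ^ q) (uIcc (2*T₀) t) volume := by
          rw [huIcc]; exact hfc.integrableOn_Icc
        have h2 := intervalIntegral.continuousOn_primitive_interval hint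
        rwa [huIcc] at h2
      have hFint : IntervalIntegrable (fun s => ∫ τ in (2*T₀)..s, (1+τ) ^ (-a) * U τ ^ q)
          volume (2*T₀) t := hFcont.intervalIntegrable_of_Icc ht1.le
      have hlint : IntervalIntegrable (fun s => cst / (b+1) * (s - 2*T₀) ^ (b+1))
          volume (2*T₀) t := by
        apply ContinuousOn.intervalIntegrable_of_Icc ht1.le
        exact continuousOn_const.mul
          ((continuousOn_id.sub continuousOn_const).rpow_const (fun x _ => Or.inr (by linarith)))
      have houter : cst / (b+1) * ((t - 2*T₀) ^ (b+1+1) / (b+1+1))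
          ≤ ∫ s in (2*T₀)..t, (∫ τ in (2*T₀)..s, (1+τ) ^ (-a) * U τ ^ q) := by
        have h := intervalIntegral.integral_mono_on ht1.le hlint hFint hinner
        rwa [intervalIntegral.integral_const_mul, integral_sub_rpow (by linarith : (0:ℝ) < b+1)]
          at h
      -- conclusion of step
      have hIter' := hIter t ⟨ht1, ht2⟩
      have hchain : C * (cst / (b+1) * ((t - 2*T₀) ^ (b+1+1) / (b+1+1))) ≤ U t :=
        le_trans (mul_le_mul_of_nonneg_left houter hC.le) hIter'
      have hα1 : αs (j+1) = e := by rw [hαrec j, hedef]; ring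
      have hβ1 : βs (j+1) = b + 1 + 1 := by rw [hβrec j, hbdef]; ring
      have hDsucc : D (j+1) = C * (D j) ^ q / ((b+1) * (b+1+1)) := by
        rw [hDrec j, hbdef]; ring
      rw [hα1, hβ1, hDsucc]
      calc C * (D j) ^ q / ((b+1) * (b+1+1)) * (1+t) ^ (-e) * (t - 2*T₀) ^ (b+1+1)
          = C * (cst / (b+1) * ((t - 2*T₀) ^ (b+1+1) / (b+1+1))) := by
            have hb1 : b + 1 ≠ 0 := ne_of_gt (by linarith)
            have hb2 : b + 1 + 1 ≠ 0 := ne_of_gt (by linarith)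
            rw [hcstdef]
            field_simp
        _ ≤ U t := hchain
  -- logarithmic lower bound for D
  obtain ⟨L0, hL0def⟩ : ∃ x : ℝ, x = Real.log D0 := ⟨_, rfl⟩
  have hLrec : ∀ j : ℕ, Real.log c₁ + q * Real.log (D j) - 2*((j:ℝ)+1)*Real.log q
      ≤ Real.log (D (j+1)) := by
    intro j
    have hb0 := mul_lt_mul_of_pos_left (hβpos j) hqpos
    have hb1 : 0 < q * βs j + 1 := by linarith only [hb0, hq]
    have hb2 : 0 < q * βs j + 2 := by linarith only [hb0, hq]
    have hβle : βs j ≤ q^j * Bb := by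
      simp only [hβsdef]; linarith only [h2nn]
    have hM : q * βs j + 2 ≤ (Bb + 2) * q^(j+1) := by
      have h1 : q * βs j ≤ q^(j+1) * Bb := by
        have h2 := mul_le_mul_of_nonneg_left hβle hqpos.le
        have h3 : q^(j+1) * Bb = q * (q^j * Bb) := by rw [pow_succ]; ring
        linarith only [h2, h3]
      have h2 : (2:ℝ) ≤ 2 * q^(j+1) := by linarith only [hqj1 (j+1)]
      have h3 : (Bb + 2) * q^(j+1) = q^(j+1) * Bb + 2 * q^(j+1) := by ring
      linarith only [h1, h2, h3]
    have hMpos : 0 < (Bb + 2) * q^(j+1) := mul_pos (by linarith) (hqjpos (j+1))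
    have hPQ : (q * βs j + 1) * (q * βs j + 2) ≤ ((Bb + 2) * q^(j+1))^2 := by
      rw [sq]
      exact mul_le_mul (by linarith) hM hb2.le hMpos.le
    have hge : C * (D j) ^ q / (((Bb + 2) * q^(j+1))^2) ≤ D (j+1) := by
      rw [hDrec j]
      exact div_le_div_of_nonneg_left
        (mul_pos hC (Real.rpow_pos_of_pos (hDpos j) q)).le (mul_pos hb1 hb2) hPQ
    have hlhspos : 0 < C * (D j) ^ q / (((Bb + 2) * q^(j+1))^2) :=
      div_pos (mul_pos hC (Real.rpow_pos_of_pos (hDpos j) q)) (pow_pos hMpos 2)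
    have hlog := Real.log_le_log hlhspos hge
    rw [Real.log_div (mul_pos hC (Real.rpow_pos_of_pos (hDpos j) q)).ne'
          (pow_ne_zero 2 hMpos.ne'),
        Real.log_mul hC.ne' (Real.rpow_pos_of_pos (hDpos j) q).ne',
        Real.log_rpow (hDpos j), Real.log_pow,
        Real.log_mul (by linarith : Bb + 2 ≠ 0) (pow_ne_zero (j+1) hqpos.ne'),
        Real.log_pow] at hlog
    have hc₁log : Real.log c₁ = Real.log C - 2 * Real.log (Bb + 2) := by
      rw [hc₁def, Real.log_div hC.ne' (pow_ne_zero 2 (by linarith : Bb + 2 ≠ 0)), Real.log_pow]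
      push_cast; ring
    push_cast at hlog
    rw [hc₁log]
    linarith only [hlog]
  have hLlow : ∀ j : ℕ, q^j * (L0 - S) + W*(j:ℝ) + V ≤ Real.log (D j) := by
    intro j
    induction j with
    | zero =>
      simp only [pow_zero, Nat.cast_zero, mul_zero, one_mul, add_zero]
      rw [hD0', ← hL0def]
      linarith
    | succ j ih =>
      have h1 := hLrec j
      have h2 : q * (q^j * (L0 - S) + W*(j:ℝ) + V) ≤ q * Real.log (D j) :=
        mul_le_mul_of_nonneg_left ih hqpos.le
      have hWj : (q-1) * W * (j:ℝ) = (2 * Real.log q) * (j:ℝ) := by rw [hWeq]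
      push_cast
      rw [pow_succ]
      linarith only [hWj, hVeq, h1, h2]
  -- blow-up bound for each time in (t₁, T)
  have tbound : ∀ t ∈ Ioo t₁ T, t ≤ C₂ * ε ^ κ := by
    intro t ht
    obtain ⟨ht1, ht2⟩ := ht
    have h1t : (1:ℝ) < t := lt_of_le_of_lt ht₁1 ht1
    have h4T : 4*T₀ < t := lt_of_le_of_lt ht₁4 ht1
    have htIoo : t ∈ Ioo (2*T₀) T := ⟨by linarith, ht2⟩
    have hlogt : 0 ≤ Real.log t := Real.log_nonneg h1t.le
    have hlog2 : 0 ≤ Real.log 2 := Real.log_nonneg one_le_two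
    have h2t : (0:ℝ) < 2*t := by linarith
    have ht2' : (0:ℝ) < t/2 := by linarith
    have hδ : L0 - S - G * Real.log 2 + θ' * Real.log t ≤ 0 := by
      by_contra hcon
      push_neg at hcon
      have hlow0 := key 0 t htIoo
      have hUtpos : 0 < U t := by
        refine lt_of_lt_of_le ?_ hlow0
        exact mul_pos (mul_pos (hDpos 0) (Real.rpow_pos_of_pos (by linarith) _))
          (Real.rpow_pos_of_pos (by linarith) _)
      obtain ⟨j, hj⟩ := ((tendsto_pow_atTop_atTop_of_one_lt hq).eventually_gt_atTop
        ((Real.log (U t) - V + ν * Real.log t) /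
          (L0 - S - G * Real.log 2 + θ' * Real.log t))).exists
      have hUt := key j t htIoo
      have hDj := hDpos j
      have hlow2 : D j * (2*t) ^ (-(αs j)) * (t/2) ^ (βs j) ≤ U t := by
        refine le_trans ?_ hUt
        have hA : (2*t) ^ (-(αs j)) ≤ (1+t) ^ (-(αs j)) :=
          Real.rpow_le_rpow_of_nonpos (by linarith) (by linarith)
            (neg_nonpos.mpr (hαnn j))
        have hB : (t/2) ^ (βs j) ≤ (t - 2*T₀) ^ (βs j) :=
          Real.rpow_le_rpow (by linarith) (by linarith) (by linarith [hβpos j])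
        exact mul_le_mul (mul_le_mul_of_nonneg_left hA hDj.le) hB
          (Real.rpow_nonneg (by linarith) _)
          (mul_nonneg hDj.le (Real.rpow_nonneg (by linarith) _))
      have hlow2pos : 0 < D j * (2*t) ^ (-(αs j)) * (t/2) ^ (βs j) :=
        mul_pos (mul_pos hDj (Real.rpow_pos_of_pos h2t _)) (Real.rpow_pos_of_pos ht2' _)
      have hlog := Real.log_le_log hlow2pos hlow2
      rw [Real.log_mul (mul_pos hDj (Real.rpow_pos_of_pos h2t _)).ne'
            (Real.rpow_pos_of_pos ht2' _).ne',
          Real.log_mul hDj.ne' (Real.rpow_pos_of_pos h2t _).ne',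
          Real.log_rpow h2t, Real.log_rpow ht2',
          Real.log_mul two_ne_zero (by linarith : t ≠ 0),
          Real.log_div (by linarith : t ≠ 0) two_ne_zero] at hlog
      have hL := hLlow j
      have hWjnn : 0 ≤ W * (j:ℝ) := mul_nonneg hWnn (Nat.cast_nonneg j)
      have hsumG : q^j * G = q^j * Aa + q^j * Bb := by rw [hGdef]; ring
      have hsum : αs j + βs j ≤ q^j * G := by
        simp only [hαsdef, hβsdef]
        linarith only [hann, h2nn, hsumG]
      have hsum2 : (αs j + βs j) * Real.log 2 ≤ q^j * G * Real.log 2 :=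
        mul_le_mul_of_nonneg_right hsum hlog2
      have hdiffeq : βs j - αs j = q^j * θ' - ν := by
        simp only [hαsdef, hβsdef]
        rw [hνdef, ← hBA]; ring
      have hdiff : (βs j - αs j) * Real.log t = (q^j * θ' - ν) * Real.log t := by
        rw [hdiffeq]
      have e1 : Real.log (D j) - (αs j + βs j)*Real.log 2 + (βs j - αs j)*Real.log t
          ≤ Real.log (U t) := by linarith only [hlog]
      have e3 : q^j*(L0 - S) + V ≤ Real.log (D j) := by linarith only [hL, hWjnn]
      have hfin : q^j * (L0 - S - G * Real.log 2 + θ' * Real.log t) + V - ν * Real.log t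
          ≤ Real.log (U t) := by linarith only [e1, hdiff, e3, hsum2]
      have hjj := mul_lt_mul_of_pos_right hj hcon
      rw [div_mul_cancel₀ _ (ne_of_gt hcon)] at hjj
      linarith only [hfin, hjj]
    -- convert to bound on t
    have hL0eq : L0 = Real.log K + p * Real.log ε := by
      rw [hL0def, hD0def, Real.log_mul hK.ne' (Real.rpow_pos_of_pos hεpos p).ne',
        Real.log_rpow hεpos]
    have h5 : θ' * Real.log t ≤ S + G * Real.log 2 - (Real.log K + p * Real.log ε) := by
      rw [← hL0eq]; linarith only [hδ]
    have hlt : Real.log t ≤ (S + G * Real.log 2 - Real.log K)/θ' + (-(p/θ')) * Real.log ε := by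
      have heq : (S + G * Real.log 2 - Real.log K)/θ' + (-(p/θ')) * Real.log ε
          = (S + G * Real.log 2 - (Real.log K + p * Real.log ε))/θ' := by
        field_simp
        ring
      rw [heq, le_div_iff₀ hθ'pos]
      linarith only [h5]
    have hκeq : κ = -(p/θ') := by
      rw [hκdef, hθ'def]; field_simp
    calc t = Real.exp (Real.log t) := (Real.exp_log (by linarith)).symm
      _ ≤ Real.exp ((S + G * Real.log 2 - Real.log K)/θ' + (-(p/θ')) * Real.log ε) :=
          Real.exp_le_exp.mpr hlt
      _ = C₂ * ε ^ κ := by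
          rw [Real.exp_add, hC₂def, hκeq, Real.rpow_def_of_pos hεpos,
            mul_comm (Real.log ε)]
  -- final assembly
  have hC'1 : t₁ + 1 ≤ max (t₁+1) (2*C₂) := le_max_left _ _
  have hC'2 : 2*C₂ ≤ max (t₁+1) (2*C₂) := le_max_right _ _
  by_cases hcase : T ≤ t₁ + 1
  · calc T ≤ t₁ + 1 := hcase
      _ = (t₁+1) * 1 := by ring
      _ ≤ max (t₁+1) (2*C₂) * ε ^ κ :=
          mul_le_mul hC'1 hεκ1 one_pos.le (by linarith)
  · push_neg at hcase
    have htIoo : (t₁ + T)/2 ∈ Ioo t₁ T := ⟨by linarith, by linarith⟩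
    have hb := tbound _ htIoo
    have hmul : 2*C₂ * ε ^ κ ≤ max (t₁+1) (2*C₂) * ε ^ κ :=
      mul_le_mul_of_nonneg_right hC'2 hεκpos.le
    have ht₁pos : 0 < t₁ := lt_of_lt_of_le one_pos ht₁1
    linarith only [hb, hmul, ht₁pos]
end

section
/- Let n ≥ 2 be an integer and ℓ > 0. Then the quadratic equation ((ℓ+1)n−1)p² − ((ℓ+1)n+1−2ℓ)p − 2(ℓ+1) = 0 has a unique positive root p_0(n;ℓ), the quadratic equation ((ℓ+1)n−1−2ℓ)p² − ((ℓ+1)n+1−4ℓ)p − 2(ℓ+1) = 0 has a unique positive root p_diag(n;ℓ), and with p_1(n;ℓ) = ((ℓ+1)n+1)/((ℓ+1)n−1) the strict inequalities p_1(n;ℓ) < p_0(n;ℓ) < p_diag(n;ℓ) hold. -/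
/-- A quadratic `a p² - b p - c` with `a, c > 0` has a positive root. -/
lemma quad_pos_root (a b c : ℝ) (ha : 0 < a) (hc : 0 < c) :
    ∃ p : ℝ, 0 < p ∧ a*p^2 - b*p - c = 0 := by
  set s := Real.sqrt (b^2 + 4*a*c) with hs
  have hnn : (0:ℝ) ≤ b^2 + 4*a*c := by nlinarith [sq_nonneg b]
  have hs2 : s^2 = b^2 + 4*a*c := Real.sq_sqrt hnn
  have hsb : |b| < s := by
    have : Real.sqrt (b^2) < s := by
      apply Real.sqrt_lt_sqrt (sq_nonneg b); nlinarith
    simpa [Real.sqrt_sq_eq_abs] using this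
  have hpos : 0 < b + s := by
    have := neg_abs_le b; linarith
  refine ⟨(b + s)/(2*a), div_pos hpos (by linarith), ?_⟩
  field_simp
  nlinarith [hs2]

/-- Uniqueness of the positive root. -/
lemma quad_root_unique (a b c : ℝ) (ha : 0 < a) (hc : 0 < c) (p q : ℝ)
    (hp : 0 < p) (hq : 0 < q) (hrp : a*p^2 - b*p - c = 0)
    (hrq : a*q^2 - b*q - c = 0) : p = q := by
  by_contra hne
  have hfac : (p - q) * (a*(p+q) - b) = 0 := by linear_combination hrp - hrq
  have h2 : a*(p+q) - b = 0 := by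
    rcases mul_eq_zero.1 hfac with h | h
    · exact absurd (by linarith : p = q) hne
    · exact h
  nlinarith [mul_pos hp hq]

/-- If the quadratic is negative at a positive point `x`, then `x` is below the root. -/
lemma lt_root (a b c : ℝ) (ha : 0 < a) (hc : 0 < c) (p x : ℝ)
    (hp : 0 < p) (hroot : a*p^2 - b*p - c = 0) (hx : 0 < x)
    (hfx : a*x^2 - b*x - c < 0) : x < p := by
  have hb : b < a*p := (mul_lt_mul_iff_of_pos_right hp).mp (by nlinarith)
  by_contra h
  push_neg at h
  have h2 : 0 ≤ a*(x+p) - b := by nlinarith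
  nlinarith [mul_nonneg (sub_nonneg.2 h) h2]

/-- The quadratic equations defining `p_0(n;ℓ)` and `p_diag(n;ℓ)` each have a
unique positive root, and `p_1(n;ℓ) < p_0(n;ℓ) < p_diag(n;ℓ)` where
`p_1(n;ℓ) = ((ℓ+1)n+1)/((ℓ+1)n−1)`. -/
theorem exponents_ordering (n : ℕ) (hn : 2 ≤ n) (l : ℝ) (hl : 0 < l) :
    (∃! p : ℝ, 0 < p ∧
      ((l+1)*(n:ℝ) - 1)*p^2 - ((l+1)*(n:ℝ) + 1 - 2*l)*p - 2*(l+1) = 0) ∧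
    (∃! p : ℝ, 0 < p ∧
      ((l+1)*(n:ℝ) - 1 - 2*l)*p^2 - ((l+1)*(n:ℝ) + 1 - 4*l)*p - 2*(l+1) = 0) ∧
    ∀ p₀ pd : ℝ,
      (0 < p₀ ∧ ((l+1)*(n:ℝ) - 1)*p₀^2 - ((l+1)*(n:ℝ) + 1 - 2*l)*p₀ - 2*(l+1) = 0) →
      (0 < pd ∧ ((l+1)*(n:ℝ) - 1 - 2*l)*pd^2 - ((l+1)*(n:ℝ) + 1 - 4*l)*pd - 2*(l+1) = 0) →
      ((l+1)*(n:ℝ) + 1)/((l+1)*(n:ℝ) - 1) < p₀ ∧ p₀ < pd := by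
  have hn2 : (2:ℝ) ≤ (n:ℝ) := by exact_mod_cast hn
  set m : ℝ := (l+1)*(n:ℝ) with hm
  have hm2 : 2*l + 2 ≤ m := by nlinarith
  have ha1 : 0 < m - 1 := by linarith
  have ha2 : 0 < m - 1 - 2*l := by linarith
  have hc : 0 < 2*(l+1) := by linarith
  refine ⟨?_, ?_, ?_⟩
  · obtain ⟨p, hp⟩ := quad_pos_root (m-1) (m+1-2*l) (2*(l+1)) ha1 hc
    refine ⟨p, ⟨hp.1, by linear_combination hp.2⟩, ?_⟩
    rintro q ⟨hq1, hq2⟩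
    exact quad_root_unique (m-1) (m+1-2*l) (2*(l+1)) ha1 hc q p hq1 hp.1
      (by linear_combination hq2) hp.2
  · obtain ⟨p, hp⟩ := quad_pos_root (m-1-2*l) (m+1-4*l) (2*(l+1)) ha2 hc
    refine ⟨p, ⟨hp.1, by linear_combination hp.2⟩, ?_⟩
    rintro q ⟨hq1, hq2⟩
    exact quad_root_unique (m-1-2*l) (m+1-4*l) (2*(l+1)) ha2 hc q p hq1 hp.1
      (by linear_combination hq2) hp.2
  · rintro p₀ pd ⟨hp0, hr0⟩ ⟨hpd, hrd⟩
    have hr0' : (m-1)*p₀^2 - (m+1-2*l)*p₀ - 2*(l+1) = 0 := by linear_combination hr0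
    have hrd' : (m-1-2*l)*pd^2 - (m+1-4*l)*pd - 2*(l+1) = 0 := by linear_combination hrd
    -- p₀ > 1 since f(1) = -4 < 0
    have h1 : 1 < p₀ := lt_root (m-1) (m+1-2*l) (2*(l+1)) ha1 hc p₀ 1 hp0 hr0'
      one_pos (by ring_nf; nlinarith)
    constructor
    · -- f(p₁) = (4l - 2m + 2)/(m-1) < 0
      set x := (m+1)/(m-1) with hx
      have hxpos : 0 < x := div_pos (by linarith) ha1
      have hval : ((m-1)*x^2 - (m+1-2*l)*x - 2*(l+1)) * (m-1) = 4*l - 2*m + 2 := by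
        rw [hx]
        field_simp
        ring
      have hneg : (m-1)*x^2 - (m+1-2*l)*x - 2*(l+1) < 0 := by
        nlinarith [hval]
      exact lt_root (m-1) (m+1-2*l) (2*(l+1)) ha1 hc p₀ x hp0 hr0' hxpos hneg
    · -- g(p₀) = -2l p₀ (p₀ - 1) < 0
      have hneg : (m-1-2*l)*p₀^2 - (m+1-4*l)*p₀ - 2*(l+1) < 0 := by
        have : (m-1-2*l)*p₀^2 - (m+1-4*l)*p₀ - 2*(l+1)
            = -2*l*p₀*(p₀-1) := by linear_combination hr0'
        rw [this]
        have := mul_pos hp0 (by linarith : (0:ℝ) < p₀ - 1)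
        nlinarith
      exact lt_root (m-1-2*l) (m+1-4*l) (2*(l+1)) ha2 hc pd p₀ hpd hrd' hp0 hneg
end

section
/- Let n ≥ 2 be an integer and ℓ > 0. Set N = (ℓ+1)n, p_1(n;ℓ) = (N+1)/(N−1) and p̃_1(n;ℓ) = ((N+3)(N−1) − 4ℓ)/((N−1)² − 4ℓ). Then (N−1)² − 4ℓ > 0, the pair (p, q) = (p_1(n;ℓ), p̃_1(n;ℓ)) satisfies [((ℓ+1)n−1)p − 2ℓ(p−1) − 2](q−1) = 4, and p_0(n;ℓ) < p_diag(n;ℓ) < p̃_1(n;ℓ). -/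
set_option maxHeartbeats 1600000 in
/-- With `N = (ℓ+1)n`, `p_1(n;ℓ) = (N+1)/(N−1)` and
`p̃_1(n;ℓ) = ((N+3)(N−1) − 4ℓ)/((N−1)² − 4ℓ)`: one has `(N−1)² − 4ℓ > 0`, the
pair `(p_1(n;ℓ), p̃_1(n;ℓ))` lies on the boundary
`[((ℓ+1)n−1)p − 2ℓ(p−1) − 2](q−1) = 4` of the blow-up region, and
`p_0(n;ℓ) < p_diag(n;ℓ) < p̃_1(n;ℓ)`. -/
theorem vertical_intersection_ordering (n : ℕ) (hn : 2 ≤ n) (l : ℝ) (hl : 0 < l) :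
    0 < ((l+1)*(n:ℝ) - 1)^2 - 4*l ∧
    ((((l+1)*(n:ℝ) - 1) * (((l+1)*(n:ℝ) + 1)/((l+1)*(n:ℝ) - 1))
        - 2*l*((((l+1)*(n:ℝ) + 1)/((l+1)*(n:ℝ) - 1)) - 1) - 2)
      * ((((l+1)*(n:ℝ) + 3)*((l+1)*(n:ℝ) - 1) - 4*l)/(((l+1)*(n:ℝ) - 1)^2 - 4*l) - 1)
      = 4) ∧
    ∀ p₀ pd : ℝ,
      (0 < p₀ ∧ ((l+1)*(n:ℝ) - 1)*p₀^2 - ((l+1)*(n:ℝ) + 1 - 2*l)*p₀ - 2*(l+1) = 0) →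
      (0 < pd ∧ ((l+1)*(n:ℝ) - 1 - 2*l)*pd^2 - ((l+1)*(n:ℝ) + 1 - 4*l)*pd - 2*(l+1) = 0) →
      (p₀ < pd ∧
        pd < (((l+1)*(n:ℝ) + 3)*((l+1)*(n:ℝ) - 1) - 4*l)/(((l+1)*(n:ℝ) - 1)^2 - 4*l)) := by
  have hn2 : (2:ℝ) ≤ (n:ℝ) := by exact_mod_cast hn
  have hN : 2*l + 2 ≤ (l+1)*(n:ℝ) := by nlinarith
  set N : ℝ := (l+1)*(n:ℝ) with hNdef
  -- m = N - 1 ≥ 2l+1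
  have hm : 2*l + 1 ≤ N - 1 := by linarith
  have hmpos : 0 < N - 1 := by linarith
  have hD : 0 < (N - 1)^2 - 4*l := by nlinarith
  refine ⟨hD, ?_, ?_⟩
  · field_simp [hmpos.ne', (by linarith : (N - 1)^2 - l*4 ≠ 0)]
    ring
  · intro p₀ pd ⟨hp0, eq0⟩ ⟨hpd, eqd⟩
    have ha' : (1:ℝ) ≤ N - 1 - 2*l := by linarith
    -- pd > 1
    have hpd1 : 1 < pd := by
      by_contra h
      push_neg at h
      nlinarith [mul_nonneg (mul_nonneg (by linarith : (0:ℝ) ≤ N - 1 - 2*l) hpd.le)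
        (by linarith : (0:ℝ) ≤ 1 - pd),
        mul_nonneg (by linarith : (0:ℝ) ≤ 2*l + 2) (by linarith : (0:ℝ) ≤ 1 - pd)]
    -- (N-1) p₀ > N+1-2l
    have hAB : N + 1 - 2*l < (N - 1) * p₀ := by
      by_contra h
      push_neg at h
      nlinarith [mul_nonneg (by linarith : (0:ℝ) ≤ (N + 1 - 2*l) - (N - 1)*p₀) hp0.le]
    constructor
    · -- p₀ < pd
      by_contra h
      push_neg at h
      have key : 0 ≤ (p₀ - pd) * ((N - 1)*(pd + p₀) - (N + 1 - 2*l)) := by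
        apply mul_nonneg (by linarith)
        nlinarith [mul_pos hmpos hpd]
      nlinarith [mul_pos (mul_pos hl hpd) (by linarith : (0:ℝ) < pd - 1)]
    · -- pd < p̃
      rw [lt_div_iff₀ hD]
      by_contra h
      push_neg at h
      set num : ℝ := (N + 3)*(N - 1) - 4*l with hnum
      set D : ℝ := (N - 1)^2 - 4*l with hDdef
      have hnumpos : 0 < num := by
        have : num = D + 4*(N-1) := by rw [hnum, hDdef]; ring
        nlinarith
      -- (N-1-2l) pd > N+1-4l
      have ha'b : N + 1 - 4*l < (N - 1 - 2*l) * pd := by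
        by_contra h2
        push_neg at h2
        nlinarith [mul_nonneg (by linarith : (0:ℝ) ≤ (N + 1 - 4*l) - (N - 1 - 2*l)*pd) hpd.le]
      have h2 : 0 < (N - 1 - 2*l)*(pd*D + num) - (N + 1 - 4*l)*D := by
        nlinarith [mul_pos (by linarith : (0:ℝ) < (N - 1 - 2*l)*pd - (N + 1 - 4*l)) hD,
          mul_pos (by linarith : (0:ℝ) < N - 1 - 2*l) hnumpos]
      have key : 0 ≤ (pd*D - num) * ((N - 1 - 2*l)*(pd*D + num) - (N + 1 - 4*l)*D) :=
        mul_nonneg (by linarith) h2.le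
      have hid : (pd*D - num) * ((N - 1 - 2*l)*(pd*D + num) - (N + 1 - 4*l)*D)
          = D^2 * ((N - 1 - 2*l)*pd^2 - (N + 1 - 4*l)*pd - 2*(l+1))
            - 8*((N - 1) - 2*l)*((N - 1)^2 + 4*l) := by
        rw [hnum, hDdef]; ring
      have hfin : 0 < 8*((N - 1) - 2*l)*((N - 1)^2 + 4*l) := by
        apply mul_pos (by linarith) (by nlinarith)
      rw [hid] at key
      rw [eqd] at key
      linarith [key]
end
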